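/- arXiv:1010.4662 — 7 statements merged into one kernel-verified Lean document; each statement's English description precedes it below -/
import Mathlib

section
/- Let B be freely generated by A_1,…,A_3, and let B_13, B_23 be the subalgebras generated by {A_1,A_3} and {A_2,A_3} respectively. Any function f on B_13 ∪ B_23 whose restrictions to B_13 and B_23 are normalized measures extends to a normalized measure on B. -/
/-!
The restriction of `f` to the subalgebra generated by `x, z` is determined by its values on
the four atoms `x^± ⊓ z^±`. So the restrictions of `f` to `B₁₃` and `B₂₃` amount to two laws
`p (a, c)` and `q (b, c)` on `Bool × Bool` with the same marginal `c ↦ f (A₃^±)`. The conditionally independent coupling `w (a, b, c) = p (a, c) q (b, c) / r c`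
is a law on `Bool × Bool × Bool` with marginals `p` and `q`. Freeness gives a homomorphism
`φ : B → Finset (Bool × Bool × Bool)` sending `A i` to `{v | vᵢ = true}`, and
`μ x = ∑ v ∈ φ x, w v` is a normalized measure that agrees with `f` on the atoms of both
subalgebras, hence on both subalgebras.
-/

def IsNormMeasure {B : Type*} [BooleanAlgebra B] (m : B → ℝ) : Prop :=
  (∀ x, 0 ≤ m x) ∧ (∀ x y : B, x ⊓ y = ⊥ → m (x ⊔ y) = m x + m y) ∧ m ⊤ = 1

/-- `m` restricts to a normalized measure on the subset `S`. -/
def IsMeasureOn {B : Type*} [BooleanAlgebra B] (m : B → ℝ) (S : Set B) : Prop :=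
  (∀ x ∈ S, 0 ≤ m x) ∧
  (∀ x ∈ S, ∀ y ∈ S, x ⊓ y = ⊥ → m (x ⊔ y) = m x + m y) ∧ m ⊤ = 1

/-- The Boolean subalgebra generated by `G`: the smallest subset containing `G`, `⊤`, `⊥`,
closed under meet, join and complement. -/
def subalgClosure {B : Type*} [BooleanAlgebra B] (G : Set B) : Set B :=
  ⋂₀ {S : Set B | G ⊆ S ∧ (⊤ : B) ∈ S ∧ (⊥ : B) ∈ S ∧ (∀ x ∈ S, xᶜ ∈ S) ∧
      (∀ x ∈ S, ∀ y ∈ S, x ⊓ y ∈ S) ∧ (∀ x ∈ S, ∀ y ∈ S, x ⊔ y ∈ S)}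

def IsFreelyGeneratedBy {n : ℕ} {B : Type*} [BooleanAlgebra B] (A : Fin n → B) : Prop :=
  ∀ (C : Type) [BooleanAlgebra C], ∀ g : Fin n → C,
    ∃! φ : BoundedLatticeHom B C, ∀ i, φ (A i) = g i

open Function

section Closure

variable {B : Type*} [BooleanAlgebra B] {G : Set B} {x y : B}

lemma subset_subalgClosure : G ⊆ subalgClosure G :=
  fun _ hx => Set.mem_sInter.2 fun _ hS => hS.1 hx

lemma bot_mem_subalgClosure : (⊥ : B) ∈ subalgClosure G :=
  Set.mem_sInter.2 fun _ hS => hS.2.2.1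

lemma compl_mem_subalgClosure (hx : x ∈ subalgClosure G) : xᶜ ∈ subalgClosure G :=
  Set.mem_sInter.2 fun S hS => hS.2.2.2.1 x (Set.mem_sInter.1 hx S hS)

lemma inf_mem_subalgClosure (hx : x ∈ subalgClosure G) (hy : y ∈ subalgClosure G) :
    x ⊓ y ∈ subalgClosure G :=
  Set.mem_sInter.2 fun S hS =>
    hS.2.2.2.2.1 x (Set.mem_sInter.1 hx S hS) y (Set.mem_sInter.1 hy S hS)

lemma sup_mem_subalgClosure (hx : x ∈ subalgClosure G) (hy : y ∈ subalgClosure G) :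
    x ⊔ y ∈ subalgClosure G :=
  Set.mem_sInter.2 fun S hS =>
    hS.2.2.2.2.2 x (Set.mem_sInter.1 hx S hS) y (Set.mem_sInter.1 hy S hS)

end Closure

section Additive

variable {B : Type*} [BooleanAlgebra B]

def IsAdditiveOn (m : B → ℝ) (S : Set B) : Prop :=
  ∀ x ∈ S, ∀ y ∈ S, x ⊓ y = ⊥ → m (x ⊔ y) = m x + m y

variable {m : B → ℝ} {G : Set B}

lemma IsAdditiveOn.map_bot (hm : IsAdditiveOn m (subalgClosure G)) : m ⊥ = 0 := by
  have h := hm ⊥ bot_mem_subalgClosure ⊥ bot_mem_subalgClosure (inf_bot_eq _)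
  rw [sup_bot_eq] at h
  linarith

lemma IsNormMeasure.isAdditiveOn (hm : IsNormMeasure m) (S : Set B) : IsAdditiveOn m S :=
  fun x _ y _ => hm.2.1 x y

lemma IsAdditiveOn.map_finset_sup {ι : Type*} [DecidableEq ι]
    (hm : IsAdditiveOn m (subalgClosure G)) {a : ι → B} (ha : ∀ i, a i ∈ subalgClosure G)
    (hdisj : Pairwise (Disjoint on a)) (T : Finset ι) : m (T.sup a) = ∑ i ∈ T, m (a i) := by
  induction T using Finset.induction with
  | empty => exact hm.map_bot
  | insert i T hi ih =>
    have hT : T.sup a ∈ subalgClosure G :=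
      Finset.sup_induction bot_mem_subalgClosure (fun _ h _ h' => sup_mem_subalgClosure h h')
        fun j _ => ha j
    have hdisjT : Disjoint (a i) (T.sup a) :=
      Finset.disjoint_sup_right.2 fun j hj => hdisj (ne_of_mem_of_not_mem hj hi).symm
    rw [Finset.sup_insert, Finset.sum_insert hi, ← ih, hm _ (ha i) _ hT (disjoint_iff.1 hdisjT)]

end Additive

section Partition

variable {B ι : Type*} [BooleanAlgebra B] [DecidableEq ι] {a : ι → B}

lemma finset_sup_inf_finset_sup (hdisj : Pairwise (Disjoint on a)) (s t : Finset ι) :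
    s.sup a ⊓ t.sup a = (s ∩ t).sup a := by
  induction s using Finset.induction with
  | empty => simp
  | insert i s hi ih =>
    rw [Finset.sup_insert, inf_sup_right, ih]
    by_cases h : i ∈ t
    · rw [Finset.insert_inter_of_mem h, Finset.sup_insert, inf_eq_left.2 (Finset.le_sup h)]
    · have hdisjt : Disjoint (a i) (t.sup a) :=
        Finset.disjoint_sup_right.2 fun j hj => hdisj (ne_of_mem_of_not_mem hj h).symm
      rw [Finset.insert_inter_of_notMem h, disjoint_iff.1 hdisjt, bot_sup_eq]

lemma compl_finset_sup [Fintype ι] (hdisj : Pairwise (Disjoint on a))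
    (hcover : Finset.univ.sup a = ⊤) (s : Finset ι) : (s.sup a)ᶜ = sᶜ.sup a := by
  refine (IsCompl.of_eq ?_ ?_).compl_eq
  · rw [finset_sup_inf_finset_sup hdisj, Finset.inter_compl, Finset.sup_empty]
  · rw [← Finset.sup_union, Finset.union_compl, hcover]

lemma subalgClosure_subset_range_finset_sup [Fintype ι] (hdisj : Pairwise (Disjoint on a))
    (hcover : Finset.univ.sup a = ⊤) {G : Set B}
    (hG : G ⊆ Set.range fun s : Finset ι => s.sup a) :
    subalgClosure G ⊆ Set.range fun s : Finset ι => s.sup a := by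
  refine Set.sInter_subset_of_mem
    ⟨hG, ⟨Finset.univ, hcover⟩, ⟨∅, Finset.sup_empty⟩, ?_, ?_, ?_⟩
  · rintro _ ⟨s, rfl⟩
    exact ⟨sᶜ, (compl_finset_sup hdisj hcover s).symm⟩
  · rintro _ ⟨s, rfl⟩ _ ⟨t, rfl⟩
    exact ⟨s ∩ t, (finset_sup_inf_finset_sup hdisj s t).symm⟩
  · rintro _ ⟨s, rfl⟩ _ ⟨t, rfl⟩
    exact ⟨s ∪ t, Finset.sup_union⟩

end Partition

section PairAtoms

variable {B : Type*} [BooleanAlgebra B]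

def literal (x : B) : Bool → B
  | true => x
  | false => xᶜ

def pairAtom (x z : B) (p : Bool × Bool) : B := literal x p.1 ⊓ literal z p.2

variable {x z : B}

lemma literal_mem_subalgClosure {G : Set B} (hx : x ∈ subalgClosure G) (b : Bool) :
    literal x b ∈ subalgClosure G := by
  cases b
  exacts [compl_mem_subalgClosure hx, hx]

lemma pairAtom_mem_subalgClosure (p : Bool × Bool) : pairAtom x z p ∈ subalgClosure {x, z} :=
  inf_mem_subalgClosure (literal_mem_subalgClosure (subset_subalgClosure (by simp)) _)
    (literal_mem_subalgClosure (subset_subalgClosure (by simp)) _)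

lemma disjoint_literal {b b' : Bool} (h : b ≠ b') : Disjoint (literal x b) (literal x b') := by
  cases b <;> cases b' <;> simp_all [literal, disjoint_compl_left, disjoint_compl_right]

lemma pairwise_disjoint_pairAtom : Pairwise (Disjoint on pairAtom x z) := by
  rintro ⟨a, c⟩ ⟨a', c'⟩ h
  by_cases ha : a = a'
  · have hc : c ≠ c' := by rintro rfl; exact h (by rw [ha])
    exact ((disjoint_literal hc).mono_left inf_le_right).mono_right inf_le_right
  · exact ((disjoint_literal ha).mono_left inf_le_left).mono_right inf_le_left

lemma literal_true_inf_sup_literal_false_inf (y : B) :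
    (literal x true ⊓ y) ⊔ (literal x false ⊓ y) = y := by
  rw [literal, literal, ← inf_sup_right, sup_compl_eq_top, top_inf_eq]

lemma inf_literal_true_sup_inf_literal_false (y : B) :
    (y ⊓ literal x true) ⊔ (y ⊓ literal x false) = y := by
  rw [literal, literal, ← inf_sup_left, sup_compl_eq_top, inf_top_eq]

lemma univ_sup_pairAtom : (Finset.univ : Finset (Bool × Bool)).sup (pairAtom x z) = ⊤ := by
  rw [← Finset.univ_product_univ, Finset.sup_product_left]
  simp only [Fintype.univ_bool, Finset.sup_insert, Finset.sup_singleton, pairAtom]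
  rw [inf_literal_true_sup_inf_literal_false, inf_literal_true_sup_inf_literal_false]
  simp [literal]

lemma subalgClosure_pair_subset_range :
    subalgClosure {x, z} ⊆ Set.range fun s : Finset (Bool × Bool) => s.sup (pairAtom x z) := by
  refine subalgClosure_subset_range_finset_sup pairwise_disjoint_pairAtom univ_sup_pairAtom ?_
  rintro y (rfl | rfl)
  · refine ⟨{(true, true), (true, false)}, ?_⟩
    simp only [Finset.sup_insert, Finset.sup_singleton, pairAtom]
    rw [inf_literal_true_sup_inf_literal_false, literal]
  · refine ⟨{(true, true), (false, true)}, ?_⟩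
    simp only [Finset.sup_insert, Finset.sup_singleton, pairAtom]
    rw [literal_true_inf_sup_literal_false_inf, literal]

lemma IsAdditiveOn.eqOn_subalgClosure_pair {m f : B → ℝ}
    (hm : IsAdditiveOn m (subalgClosure {x, z})) (hf : IsAdditiveOn f (subalgClosure {x, z}))
    (hatom : ∀ p, m (pairAtom x z p) = f (pairAtom x z p)) :
    Set.EqOn m f (subalgClosure {x, z}) := by
  intro y hy
  obtain ⟨s, rfl⟩ := subalgClosure_pair_subset_range hy
  rw [hm.map_finset_sup pairAtom_mem_subalgClosure pairwise_disjoint_pairAtom,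
    hf.map_finset_sup pairAtom_mem_subalgClosure pairwise_disjoint_pairAtom]
  exact Finset.sum_congr rfl fun p _ => hatom p

lemma IsAdditiveOn.sum_pairAtom_fst {f : B → ℝ} (hf : IsAdditiveOn f (subalgClosure {x, z}))
    (c : Bool) : ∑ a, f (pairAtom x z (a, c)) = f (literal z c) := by
  rw [Fintype.sum_bool, ← hf _ (pairAtom_mem_subalgClosure _) _ (pairAtom_mem_subalgClosure _)
    (disjoint_iff.1 (pairwise_disjoint_pairAtom (by simp))), pairAtom, pairAtom,
    literal_true_inf_sup_literal_false_inf]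

lemma IsAdditiveOn.sum_pairAtom {f : B → ℝ} (hf : IsAdditiveOn f (subalgClosure {x, z})) :
    ∑ p, f (pairAtom x z p) = f ⊤ := by
  rw [← univ_sup_pairAtom, hf.map_finset_sup pairAtom_mem_subalgClosure
    pairwise_disjoint_pairAtom]

end PairAtoms

lemma exists_coupling_of_marginal_eq {α β γ : Type*} [Fintype α] [Fintype β]
    (p : α → γ → ℝ) (q : β → γ → ℝ) (hp : 0 ≤ p) (hq : 0 ≤ q)
    (hpq : ∀ c, ∑ a, p a c = ∑ b, q b c) :
    ∃ w : α × β × γ → ℝ, 0 ≤ w ∧ (∀ a c, ∑ b, w (a, b, c) = p a c) ∧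
      ∀ b c, ∑ a, w (a, b, c) = q b c := by
  set r : γ → ℝ := fun c => ∑ a, p a c
  have hp_zero : ∀ a c, r c = 0 → p a c = 0 := fun a c hr =>
    (Finset.sum_eq_zero_iff_of_nonneg fun a _ => hp a c).1 hr a (Finset.mem_univ a)
  have hq_zero : ∀ b c, r c = 0 → q b c = 0 := fun b c hr =>
    (Finset.sum_eq_zero_iff_of_nonneg fun b _ => hq b c).1 ((hpq c).symm.trans hr) b
      (Finset.mem_univ b)
  -- Where `r c = 0`, both `p · c` and `q · c` vanish, and so does `w` since `x / 0 = 0`.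
  refine ⟨fun v => p v.1 v.2.2 * q v.2.1 v.2.2 / r v.2.2, fun v => ?_, fun a c => ?_,
    fun b c => ?_⟩
  · exact div_nonneg (mul_nonneg (hp _ _) (hq _ _)) (Finset.sum_nonneg fun a _ => hp a _)
  · simp only [← Finset.sum_div, ← Finset.mul_sum, ← hpq c]
    by_cases hr : r c = 0
    · rw [hp_zero a c hr, zero_mul, zero_div]
    · exact mul_div_cancel_right₀ _ hr
  · simp only [← Finset.sum_div, ← Finset.sum_mul]
    by_cases hr : r c = 0
    · rw [hq_zero b c hr, mul_zero, zero_div]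
    · exact mul_div_cancel_left₀ _ hr

section FinsetValued

variable {B Ω : Type*} [BooleanAlgebra B] [Fintype Ω] [DecidableEq Ω]

lemma isNormMeasure_sum_map (φ : BoundedLatticeHom B (Finset Ω)) {w : Ω → ℝ} (hw : 0 ≤ w)
    (hw_one : ∑ v, w v = 1) : IsNormMeasure fun x => ∑ v ∈ φ x, w v := by
  refine ⟨fun x => Finset.sum_nonneg fun v _ => hw v, fun x y hxy => ?_, ?_⟩
  · have hdisj : Disjoint (φ x) (φ y) := disjoint_iff.2 (by rw [← map_inf, hxy, map_bot])
    simp only [map_sup, Finset.sup_eq_union, Finset.sum_union hdisj]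
  · simp only [map_top, Finset.top_eq_univ, hw_one]

lemma map_literal (φ : BoundedLatticeHom B (Finset Ω)) {x : B} {π : Ω → Bool}
    (hx : φ x = Finset.univ.filter fun v => π v = true) (b : Bool) :
    φ (literal x b) = Finset.univ.filter fun v => π v = b := by
  cases b
  · rw [literal, map_compl', hx, Finset.compl_filter]
    simp
  · exact hx

lemma map_pairAtom {x z : B} (φ : BoundedLatticeHom B (Finset Ω))
    {π σ : Ω → Bool} (hx : φ x = Finset.univ.filter fun v => π v = true)
    (hz : φ z = Finset.univ.filter fun v => σ v = true) (p : Bool × Bool) :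
    φ (pairAtom x z p) = Finset.univ.filter fun v => π v = p.1 ∧ σ v = p.2 := by
  rw [pairAtom, map_inf, map_literal φ hx, map_literal φ hz, Finset.inf_eq_inter,
    Finset.filter_and]

end FinsetValued

section TripleSums

variable {α β γ : Type*} [Fintype α] [Fintype β] [Fintype γ] (w : α × β × γ → ℝ)

lemma sum_filter_fst_eq_and_snd_snd_eq [DecidableEq α] [DecidableEq γ] (a : α) (c : γ) :
    ∑ v ∈ Finset.univ.filter (fun v => v.1 = a ∧ v.2.2 = c), w v = ∑ b, w (a, b, c) := by
  simp [Finset.sum_filter, Fintype.sum_prod_type, ite_and, Finset.sum_ite_eq']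

lemma sum_filter_snd_fst_eq_and_snd_snd_eq [DecidableEq β] [DecidableEq γ] (b : β) (c : γ) :
    ∑ v ∈ Finset.univ.filter (fun v => v.2.1 = b ∧ v.2.2 = c), w v = ∑ a, w (a, b, c) := by
  simp [Finset.sum_filter, Fintype.sum_prod_type, ite_and, Finset.sum_ite_eq']

end TripleSums

/-- For `B` free on three generators `A_1, A_2, A_3`: any function on
`B_13 ∪ B_23` restricting to normalized measures on the subalgebras `B_13` (generated by
`{A_1, A_3}`) and `B_23` (generated by `{A_2, A_3}`) extends to a normalized measure on `B`. -/
theorem stmt7 (B : Type*) [BooleanAlgebra B] (A : Fin 3 → B)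
    (hA : IsFreelyGeneratedBy A) (f : B → ℝ)
    (h13 : IsMeasureOn f (subalgClosure {A 0, A 2}))
    (h23 : IsMeasureOn f (subalgClosure {A 1, A 2})) :
    ∃ μ : B → ℝ, IsNormMeasure μ ∧
      ∀ x ∈ subalgClosure {A 0, A 2} ∪ subalgClosure {A 1, A 2}, μ x = f x := by
  obtain ⟨hf13_nonneg, hf13_add : IsAdditiveOn f _, hf_top⟩ := h13
  obtain ⟨hf23_nonneg, hf23_add : IsAdditiveOn f _, -⟩ := h23
  obtain ⟨w, hw, hw13, hw23⟩ := exists_coupling_of_marginal_eq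
    (fun a c => f (pairAtom (A 0) (A 2) (a, c))) (fun b c => f (pairAtom (A 1) (A 2) (b, c)))
    (fun a c => hf13_nonneg _ (pairAtom_mem_subalgClosure _))
    (fun b c => hf23_nonneg _ (pairAtom_mem_subalgClosure _))
    (fun c => by rw [hf13_add.sum_pairAtom_fst, hf23_add.sum_pairAtom_fst])
  obtain ⟨φ, hφ, -⟩ := hA (Finset (Bool × Bool × Bool))
    ![Finset.univ.filter (·.1 = true), Finset.univ.filter (·.2.1 = true),
      Finset.univ.filter (·.2.2 = true)]
  have hw_one : ∑ v, w v = 1 := calc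
    ∑ v, w v = ∑ a, ∑ c, ∑ b, w (a, b, c) := by
      rw [Fintype.sum_prod_type]
      exact Finset.sum_congr rfl fun a _ => Fintype.sum_prod_type_right _
    _ = ∑ p, f (pairAtom (A 0) (A 2) p) := by simp only [hw13, Fintype.sum_prod_type]
    _ = 1 := by rw [hf13_add.sum_pairAtom, hf_top]
  have hμ := isNormMeasure_sum_map φ hw hw_one
  refine ⟨_, hμ, ?_⟩
  rintro x (hx | hx)
  · refine (hμ.isAdditiveOn _).eqOn_subalgClosure_pair hf13_add (fun ⟨a, c⟩ => ?_) hx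
    rw [map_pairAtom φ (hφ 0) (hφ 2), sum_filter_fst_eq_and_snd_snd_eq, hw13]
  · refine (hμ.isAdditiveOn _).eqOn_subalgClosure_pair hf23_add (fun ⟨b, c⟩ => ?_) hx
    rw [map_pairAtom φ (hφ 1) (hφ 2), sum_filter_snd_fst_eq_and_snd_snd_eq, hw23]
end

section
/- For probabilities: given p_1, p_2, p_3, p_13, p_23 ∈ [0,1] satisfying p_13 ≤ min(p_1, p_3), p_23 ≤ min(p_2, p_3), p_1 + p_3 − p_13 ≤ 1 and p_2 + p_3 − p_23 ≤ 1, there exists a probability measure μ on {0,1}^3 with marginals μ(ε_i = 1) = p_i (i = 1,2,3), μ(ε_1 = ε_3 = 1) = p_13 and μ(ε_2 = ε_3 = 1) = p_23. -/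
lemma sum8 (f : (Fin 3 → Bool) → ℝ) :
    ∑ ε, f ε = f ![false,false,false] + f ![true,false,false] + f ![false,true,false]
      + f ![true,true,false] + f ![false,false,true] + f ![true,false,true]
      + f ![false,true,true] + f ![true,true,true] := by
  rw [show (Finset.univ : Finset (Fin 3 → Bool)) =
      {![false,false,false], ![true,false,false], ![false,true,false], ![true,true,false],
       ![false,false,true], ![true,false,true], ![false,true,true], ![true,true,true]} from by decide]
  rw [Finset.sum_insert (by decide), Finset.sum_insert (by decide), Finset.sum_insert (by decide),
    Finset.sum_insert (by decide), Finset.sum_insert (by decide), Finset.sum_insert (by decide),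
    Finset.sum_insert (by decide), Finset.sum_singleton]
  ring

open Finset in
/-- Bell–Wigner extension for three observables: given single and pair probabilities
satisfying the obvious constraints, there is a probability measure on `{0,1}^3` with the
prescribed marginals `p_1, p_2, p_3` and pair correlations `p_13, p_23`. -/
theorem stmt8 (p1 p2 p3 p13 p23 : ℝ)
    (h1 : p1 ∈ Set.Icc (0:ℝ) 1) (h2 : p2 ∈ Set.Icc (0:ℝ) 1) (h3 : p3 ∈ Set.Icc (0:ℝ) 1)
    (h13 : p13 ∈ Set.Icc (0:ℝ) 1) (h23 : p23 ∈ Set.Icc (0:ℝ) 1)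
    (h13a : p13 ≤ min p1 p3) (h23a : p23 ≤ min p2 p3)
    (h13b : p1 + p3 - p13 ≤ 1) (h23b : p2 + p3 - p23 ≤ 1) :
    ∃ lam : (Fin 3 → Bool) → ℝ,
      (∀ ε, 0 ≤ lam ε) ∧ (∑ ε, lam ε) = 1 ∧
      (∑ ε, if ε 0 = true then lam ε else 0) = p1 ∧
      (∑ ε, if ε 1 = true then lam ε else 0) = p2 ∧
      (∑ ε, if ε 2 = true then lam ε else 0) = p3 ∧
      (∑ ε, if ε 0 = true ∧ ε 2 = true then lam ε else 0) = p13 ∧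
      (∑ ε, if ε 1 = true ∧ ε 2 = true then lam ε else 0) = p23 := by
  have ha1 : p13 ≤ p1 := le_trans h13a (min_le_left _ _)
  have ha3 : p13 ≤ p3 := le_trans h13a (min_le_right _ _)
  have hb2 : p23 ≤ p2 := le_trans h23a (min_le_left _ _)
  have hb3 : p23 ≤ p3 := le_trans h23a (min_le_right _ _)
  obtain ⟨h10, h11⟩ := h1; obtain ⟨h20, h21⟩ := h2; obtain ⟨h30, h31⟩ := h3
  obtain ⟨h130, _⟩ := h13; obtain ⟨h230, _⟩ := h23
  refine ⟨fun ε =>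
      if ε 2 then (if ε 0 then p13 else p3 - p13) * (if ε 1 then p23 else p3 - p23) / p3
      else (if ε 0 then p1 - p13 else 1 - p3 - (p1 - p13)) *
        (if ε 1 then p2 - p23 else 1 - p3 - (p2 - p23)) / (1 - p3),
    ?_, ?_, ?_, ?_, ?_, ?_, ?_⟩
  · intro ε
    cases h2' : ε 2 <;> cases h0' : ε 0 <;> cases h1' : ε 1 <;>
      simp only [h2', h0', h1', if_true, if_false, Bool.false_eq_true, cond_true, cond_false] <;>
      exact div_nonneg (mul_nonneg (by linarith) (by linarith)) (by linarith)
  all_goals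
    rw [sum8]
    simp only [Matrix.cons_val_zero, Matrix.cons_val_one, Matrix.head_cons, Matrix.cons_val_two,
      Matrix.tail_cons, if_true, if_false, Bool.false_eq_true, and_true, and_false, true_and,
      false_and, and_self]
    norm_num
    rcases eq_or_ne p3 0 with hz | hz
    · have e13 : p13 = 0 := le_antisymm (by linarith) h130
      have e23 : p23 = 0 := le_antisymm (by linarith) h230
      rw [hz, e13, e23]; norm_num; try ring
    · rcases eq_or_ne p3 1 with ho | ho
      · have e13 : p13 = p1 := le_antisymm ha1 (by linarith)
        have e23 : p23 = p2 := le_antisymm hb2 (by linarith)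
        rw [ho, e13, e23]; norm_num
        try field_simp
        try ring
      · have hz' : (1:ℝ) - p3 ≠ 0 := sub_ne_zero.2 (Ne.symm ho)
        field_simp
        ring
end

section
/- Let B be freely generated by A_1, A_2, A_3, A_4 and f a function on B_13 ∪ B_23 ∪ B_14 ∪ B_24 restricting to normalized measures on each of these subalgebras (B_ij generated by {A_i, A_j}). Then f extends to a normalized measure on B if and only if there exist normalized measures f^{123} on B_{123} and f^{124} on B_{124} extending the respective restrictions of f and agreeing on the subalgebra B_12 generated by {A_1, A_2}. -/
/-!
Given `g` on `B_123` and `h` on `B_124` agreeing on `B_12`, glue them by making `A₃` and `A₄`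
conditionally independent given `A₁, A₂`: the atom `A₁^a A₂^b A₃^c A₄^d` gets the weight
`g(A₁^a A₂^b A₃^c) · h(A₁^a A₂^b A₄^d) / g(A₁^a A₂^b)`. Freeness provides, for each sign pattern,
a homomorphism `B → Bool` realising it, and the corresponding mixture of these two-valued measures
is a normalized measure on `B`. Summing out `d` (resp. `c`) shows that it agrees with `g` (resp. `h`)
on the atoms of `B_123` (resp. `B_124`), hence on these subalgebras, since a finitely additive
function on a finitely generated subalgebra is determined by its values on the atoms.
(In the code the generators are `A 0, …, A 3`.)
-/

namespace Fine

open Finset Function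

variable {B : Type*} [BooleanAlgebra B]

section Closure

variable {G : Set B} {x y : B}

theorem subset_subalgClosure : G ⊆ subalgClosure G :=
  fun _ hx _ hS => hS.1 hx

theorem top_mem_subalgClosure : ⊤ ∈ subalgClosure G :=
  fun _ hS => hS.2.1

theorem bot_mem_subalgClosure : ⊥ ∈ subalgClosure G :=
  fun _ hS => hS.2.2.1

theorem compl_mem_subalgClosure (hx : x ∈ subalgClosure G) : xᶜ ∈ subalgClosure G :=
  fun S hS => hS.2.2.2.1 x (hx S hS)

theorem inf_mem_subalgClosure (hx : x ∈ subalgClosure G) (hy : y ∈ subalgClosure G) :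
    x ⊓ y ∈ subalgClosure G :=
  fun S hS => hS.2.2.2.2.1 x (hx S hS) y (hy S hS)

theorem sup_mem_subalgClosure (hx : x ∈ subalgClosure G) (hy : y ∈ subalgClosure G) :
    x ⊔ y ∈ subalgClosure G :=
  fun S hS => hS.2.2.2.2.2 x (hx S hS) y (hy S hS)

theorem subalgClosure_subset {S : Set B} (hG : G ⊆ S) (htop : ⊤ ∈ S) (hbot : ⊥ ∈ S)
    (hcompl : ∀ x ∈ S, xᶜ ∈ S) (hinf : ∀ x ∈ S, ∀ y ∈ S, x ⊓ y ∈ S)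
    (hsup : ∀ x ∈ S, ∀ y ∈ S, x ⊔ y ∈ S) : subalgClosure G ⊆ S :=
  fun _ hx => hx S ⟨hG, htop, hbot, hcompl, hinf, hsup⟩

theorem subalgClosure_mono {G' : Set B} (h : G ⊆ G') : subalgClosure G ⊆ subalgClosure G' :=
  fun _ hx S hS => hx S ⟨h.trans hS.1, hS.2⟩

end Closure

def lit (x : B) (b : Bool) : B := bif b then x else xᶜ

@[simp] theorem lit_true (x : B) : lit x true = x := rfl

@[simp] theorem lit_false (x : B) : lit x false = xᶜ := rfl

theorem sup_lit (x : B) : lit x true ⊔ lit x false = ⊤ := by simp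

theorem disjoint_lit_of_ne (x : B) {b c : Bool} (h : b ≠ c) : Disjoint (lit x b) (lit x c) := by
  cases b <;> cases c <;> simp_all [disjoint_compl_left, disjoint_compl_right]

theorem lit_mem_subalgClosure {G : Set B} {x : B} (hx : x ∈ subalgClosure G) (b : Bool) :
    lit x b ∈ subalgClosure G := by
  cases b
  · exact compl_mem_subalgClosure hx
  · exact hx

theorem apply_lit_eq_true (e : BoundedLatticeHom B Bool) (x : B) (b : Bool) :
    e (lit x b) = true ↔ e x = b := by
  cases b <;> simp

section Atom

variable {ι : Type*} [Fintype ι] (a : ι → B)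

def atom (s : ι → Bool) : B := univ.inf fun i => lit (a i) (s i)

theorem atom_le_lit (s : ι → Bool) (i : ι) : atom a s ≤ lit (a i) (s i) :=
  inf_le (mem_univ i)

theorem atom_mem_subalgClosure (s : ι → Bool) : atom a s ∈ subalgClosure (Set.range a) :=
  inf_induction top_mem_subalgClosure (fun _ hx _ hy => inf_mem_subalgClosure hx hy)
    fun i _ => lit_mem_subalgClosure (subset_subalgClosure (Set.mem_range_self i)) (s i)

theorem pairwise_disjoint_atom : Pairwise (Disjoint on (atom a)) := by
  intro s t hst
  obtain ⟨i, hi⟩ := Function.ne_iff.mp hst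
  exact (disjoint_lit_of_ne (a i) hi).mono (atom_le_lit a s i) (atom_le_lit a t i)

theorem sup_atom_eq_top [DecidableEq ι] : univ.sup (atom a) = ⊤ := by
  have h := Finset.inf_sup (univ : Finset ι) (fun _ => (univ : Finset Bool)) fun i => lit (a i)
  simp only [Fintype.univ_bool, sup_insert, sup_singleton, sup_lit, inf_top] at h
  refine top_le_iff.mp (h ▸ Finset.sup_le fun g _ => ?_)
  exact le_sup_of_le (mem_univ fun i => g i (mem_univ i))
    (inf_attach univ fun i => lit (a i) (g i (mem_univ i))).le

theorem atom_le_or_disjoint {x : B} (hx : x ∈ subalgClosure (Set.range a)) (s : ι → Bool) :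
    atom a s ≤ x ∨ Disjoint (atom a s) x := by
  refine subalgClosure_subset (S := {x | ∀ s, atom a s ≤ x ∨ Disjoint (atom a s) x}) ?_
    (fun s => .inl le_top) (fun s => .inr disjoint_bot_right) ?_ ?_ ?_ hx s
  · rintro _ ⟨i, rfl⟩ s
    cases hs : s i
    · exact .inr (le_compl_iff_disjoint_right.mp (by simpa [hs] using atom_le_lit a s i))
    · exact .inl (by simpa [hs] using atom_le_lit a s i)
  · intro x hx s
    exact (hx s).symm.imp le_compl_iff_disjoint_right.mpr disjoint_compl_right_iff.mpr
  · intro x hx y hy s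
    rcases hx s with hxs | hxs
    · exact (hy s).imp (le_inf hxs) (Disjoint.mono_right inf_le_right)
    · exact .inr (hxs.mono_right inf_le_left)
  · intro x hx y hy s
    rcases hx s with hxs | hxs
    · exact .inl (le_sup_of_le_left hxs)
    · exact (hy s).imp le_sup_of_le_right (disjoint_sup_right.mpr ⟨hxs, ·⟩)

theorem exists_eq_sup_atom {x : B} (hx : x ∈ subalgClosure (Set.range a)) :
    ∃ P : Finset (ι → Bool), x = P.sup (atom a) := by
  classical
  refine ⟨univ.filter fun s => atom a s ≤ x, le_antisymm ?_ (Finset.sup_le fun s hs => ?_)⟩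
  · have hx_eq : x = univ.sup fun s => x ⊓ atom a s := by
      rw [← sup_inf_distrib_left, sup_atom_eq_top, inf_top_eq]
    refine hx_eq.trans_le (Finset.sup_le fun s _ => ?_)
    rcases atom_le_or_disjoint a hx s with hs | hs
    · exact inf_le_right.trans (le_sup (mem_filter.mpr ⟨mem_univ s, hs⟩))
    · simp [hs.symm.eq_bot]
  · exact (mem_filter.mp hs).2

end Atom

def IsAdditiveOn (m : B → ℝ) (S : Set B) : Prop :=
  ∀ x ∈ S, ∀ y ∈ S, x ⊓ y = ⊥ → m (x ⊔ y) = m x + m y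

theorem _root_.IsMeasureOn.isAdditiveOn {m : B → ℝ} {S : Set B} (hm : IsMeasureOn m S) :
    IsAdditiveOn m S :=
  hm.2.1

namespace IsAdditiveOn

variable {m : B → ℝ} {G : Set B}

theorem map_bot (hm : IsAdditiveOn m (subalgClosure G)) : m ⊥ = 0 := by
  have h := hm ⊥ bot_mem_subalgClosure ⊥ bot_mem_subalgClosure (inf_bot_eq ⊥)
  rw [bot_sup_eq] at h
  linarith

theorem apply_finset_sup (hm : IsAdditiveOn m (subalgClosure G)) {κ : Type*} {u : κ → B}
    (hu : Pairwise (Disjoint on u)) (hmem : ∀ i, u i ∈ subalgClosure G) (P : Finset κ) :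
    m (P.sup u) = ∑ i ∈ P, m (u i) := by
  induction P using Finset.cons_induction with
  | empty => exact hm.map_bot
  | cons i P hi ih =>
    have hdisj : Disjoint (u i) (P.sup u) :=
      Finset.disjoint_sup_right.mpr fun j hj => hu (ne_of_mem_of_not_mem hj hi).symm
    have hsup : P.sup u ∈ subalgClosure G :=
      sup_induction bot_mem_subalgClosure (fun _ ha _ hb => sup_mem_subalgClosure ha hb)
        fun j _ => hmem j
    rw [sup_cons, sum_cons, hm _ (hmem i) _ hsup hdisj.eq_bot, ih]

theorem eqOn_of_apply_atom {ι : Type*} [Fintype ι] {a : ι → B} {m' : B → ℝ}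
    (hm : IsAdditiveOn m (subalgClosure (Set.range a)))
    (hm' : IsAdditiveOn m' (subalgClosure (Set.range a)))
    (h : ∀ s, m (atom a s) = m' (atom a s)) : Set.EqOn m m' (subalgClosure (Set.range a)) := by
  intro x hx
  obtain ⟨P, rfl⟩ := exists_eq_sup_atom a hx
  rw [hm.apply_finset_sup (pairwise_disjoint_atom a) (atom_mem_subalgClosure a) P,
    hm'.apply_finset_sup (pairwise_disjoint_atom a) (atom_mem_subalgClosure a) P]
  exact sum_congr rfl fun s _ => h s

theorem sum_apply_inf_lit (hm : IsAdditiveOn m (subalgClosure G)) {u z : B}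
    (hu : u ∈ subalgClosure G) (hz : z ∈ subalgClosure G) :
    ∑ b, m (u ⊓ lit z b) = m u := by
  have h := hm _ (inf_mem_subalgClosure hu (lit_mem_subalgClosure hz true))
    _ (inf_mem_subalgClosure hu (lit_mem_subalgClosure hz false))
    ((disjoint_lit_of_ne z (by decide : true ≠ false)).mono inf_le_right inf_le_right).eq_bot
  rw [← inf_sup_left, sup_lit, inf_top_eq] at h
  rw [Fintype.sum_bool, h]

end IsAdditiveOn

theorem _root_.IsMeasureOn.apply_inf_lit_le {m : B → ℝ} {G : Set B}
    (hm : IsMeasureOn m (subalgClosure G)) {u z : B} (hu : u ∈ subalgClosure G)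
    (hz : z ∈ subalgClosure G) (b : Bool) : m (u ⊓ lit z b) ≤ m u := by
  rw [← hm.isAdditiveOn.sum_apply_inf_lit hu hz]
  exact single_le_sum (fun c _ => hm.1 _ (inf_mem_subalgClosure hu (lit_mem_subalgClosure hz c)))
    (mem_univ b)

theorem _root_.IsNormMeasure.isMeasureOn {μ : B → ℝ} (hμ : IsNormMeasure μ) (S : Set B) :
    IsMeasureOn μ S :=
  ⟨fun x _ => hμ.1 x, fun x _ y _ => hμ.2.1 x y, hμ.2.2⟩

section Mixture

variable {Ω : Type*} [Fintype Ω] (e : Ω → BoundedLatticeHom B Bool) (w : Ω → ℝ)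

noncomputable def mixture (x : B) : ℝ := ∑ ω, if e ω x then w ω else 0

theorem mixture_nonneg (hw : ∀ ω, 0 ≤ w ω) (x : B) : 0 ≤ mixture e w x :=
  sum_nonneg fun ω _ => by split_ifs <;> simp [hw ω]

theorem isAdditiveOn_mixture (S : Set B) : IsAdditiveOn (mixture e w) S := by
  intro x _ y _ hxy
  simp only [mixture, ← sum_add_distrib]
  refine sum_congr rfl fun ω _ => ?_
  have h := congrArg (e ω) hxy
  rw [map_inf, map_bot] at h
  rw [map_sup]
  cases hx : e ω x <;> cases hy : e ω y <;> simp_all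

end Mixture

theorem sum_mul_div_eq_of_sum_eq {κ : Type*} [Fintype κ] {u : κ → ℝ} {v D : ℝ}
    (hu : ∑ k, u k = D) (hv : D = 0 → v = 0) : ∑ k, v * u k / D = v := by
  by_cases hD : D = 0
  · simp [hD, hv hD]
  · rw [← sum_div, ← mul_sum, hu, mul_div_cancel_right₀ v hD]

theorem subalgClosure_triple (x y z : B) :
    subalgClosure {x, y, z} = subalgClosure (Set.range ![x, y, z]) := by
  rw [Matrix.range_cons, Matrix.range_cons, Matrix.range_cons_empty, Set.singleton_union,
    Set.singleton_union]

theorem atom_triple (x y z : B) (s : Fin 3 → Bool) :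
    atom ![x, y, z] s = lit x (s 0) ⊓ lit y (s 1) ⊓ lit z (s 2) := by
  simp [atom, Fin.univ_succ, inf_assoc]

section Gluing

variable {x y z t : B}

theorem inf_lit_lit_mem {G : Set B} (hx : x ∈ G) (hy : y ∈ G) (a b : Bool) :
    lit x a ⊓ lit y b ∈ subalgClosure G :=
  inf_mem_subalgClosure (lit_mem_subalgClosure (subset_subalgClosure hx) a)
    (lit_mem_subalgClosure (subset_subalgClosure hy) b)

theorem inf_lit_lit_lit_mem {G : Set B} (hx : x ∈ G) (hy : y ∈ G) (hz : z ∈ G)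
    (a b c : Bool) : lit x a ⊓ lit y b ⊓ lit z c ∈ subalgClosure G :=
  inf_mem_subalgClosure (inf_lit_lit_mem hx hy a b)
    (lit_mem_subalgClosure (subset_subalgClosure hz) c)

/-- `z` and `t` are made conditionally independent given `x` and `y`. Where the denominator
vanishes so does the numerator, and Lean's `_ / 0 = 0` gives the right weight `0`. -/
noncomputable def gluedWeight (x y z t : B) (g h : B → ℝ) : Bool × Bool × Bool × Bool → ℝ
  | (a, b, c, d) => g (lit x a ⊓ lit y b ⊓ lit z c) * h (lit x a ⊓ lit y b ⊓ lit t d) /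
      g (lit x a ⊓ lit y b)

variable (E : Bool × Bool × Bool × Bool → BoundedLatticeHom B Bool)
  (hE : ∀ ω, E ω x = ω.1 ∧ E ω y = ω.2.1 ∧ E ω z = ω.2.2.1 ∧ E ω t = ω.2.2.2)

include hE in
theorem mixture_inf_lit_left (w : Bool × Bool × Bool × Bool → ℝ) (a b c : Bool) :
    mixture E w (lit x a ⊓ lit y b ⊓ lit z c) = ∑ d, w (a, b, c, d) := by
  cases c <;> simp [mixture, apply_lit_eq_true, hE, Fintype.sum_prod_type, ite_and]

include hE in
theorem mixture_inf_lit_right (w : Bool × Bool × Bool × Bool → ℝ) (a b d : Bool) :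
    mixture E w (lit x a ⊓ lit y b ⊓ lit t d) = ∑ c, w (a, b, c, d) := by
  simp [mixture, apply_lit_eq_true, hE, Fintype.sum_prod_type, ite_and]

variable {g h : B → ℝ} (hg : IsMeasureOn g (subalgClosure {x, y, z}))
  (hh : IsMeasureOn h (subalgClosure {x, y, t})) (hgh : ∀ u ∈ subalgClosure {x, y}, g u = h u)

include hg hh in
theorem gluedWeight_nonneg (ω : Bool × Bool × Bool × Bool) :
    0 ≤ gluedWeight x y z t g h ω := by
  obtain ⟨a, b, c, d⟩ := ω
  exact div_nonneg (mul_nonneg (hg.1 _ (inf_lit_lit_lit_mem (by simp) (by simp) (by simp) a b c))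
    (hh.1 _ (inf_lit_lit_lit_mem (by simp) (by simp) (by simp) a b d)))
    (hg.1 _ (inf_lit_lit_mem (by simp) (by simp) a b))

include hE hg hh hgh in
theorem mixture_gluedWeight_inf_lit_left (a b c : Bool) :
    mixture E (gluedWeight x y z t g h) (lit x a ⊓ lit y b ⊓ lit z c) =
      g (lit x a ⊓ lit y b ⊓ lit z c) := by
  have hu_g : lit x a ⊓ lit y b ∈ subalgClosure {x, y, z} :=
    inf_lit_lit_mem (by simp) (by simp) a b
  have hu_h : lit x a ⊓ lit y b ∈ subalgClosure {x, y, t} :=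
    inf_lit_lit_mem (by simp) (by simp) a b
  have hgu : g (lit x a ⊓ lit y b) = h (lit x a ⊓ lit y b) :=
    hgh _ (inf_lit_lit_mem (by simp) (by simp) a b)
  rw [mixture_inf_lit_left E hE]
  refine sum_mul_div_eq_of_sum_eq
    ((hh.isAdditiveOn.sum_apply_inf_lit hu_h (subset_subalgClosure (by simp))).trans hgu.symm)
    fun h0 => le_antisymm ?_ (hg.1 _ (inf_lit_lit_lit_mem (by simp) (by simp) (by simp) a b c))
  exact (hg.apply_inf_lit_le hu_g (subset_subalgClosure (by simp)) c).trans h0.le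

include hE hg hh hgh in
theorem mixture_gluedWeight_inf_lit_right (a b d : Bool) :
    mixture E (gluedWeight x y z t g h) (lit x a ⊓ lit y b ⊓ lit t d) =
      h (lit x a ⊓ lit y b ⊓ lit t d) := by
  have hu_g : lit x a ⊓ lit y b ∈ subalgClosure {x, y, z} :=
    inf_lit_lit_mem (by simp) (by simp) a b
  have hu_h : lit x a ⊓ lit y b ∈ subalgClosure {x, y, t} :=
    inf_lit_lit_mem (by simp) (by simp) a b
  have hgu : g (lit x a ⊓ lit y b) = h (lit x a ⊓ lit y b) :=
    hgh _ (inf_lit_lit_mem (by simp) (by simp) a b)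
  rw [mixture_inf_lit_right E hE]
  simp only [gluedWeight, mul_comm (g _)]
  refine sum_mul_div_eq_of_sum_eq
    (hg.isAdditiveOn.sum_apply_inf_lit hu_g (subset_subalgClosure (by simp)))
    fun h0 => le_antisymm ?_ (hh.1 _ (inf_lit_lit_lit_mem (by simp) (by simp) (by simp) a b d))
  exact (hh.apply_inf_lit_le hu_h (subset_subalgClosure (by simp)) d).trans
    (hgu.symm.trans h0).le

include hE hg hh hgh in
theorem eqOn_mixture_gluedWeight_left :
    Set.EqOn (mixture E (gluedWeight x y z t g h)) g (subalgClosure {x, y, z}) := by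
  rw [subalgClosure_triple] at hg ⊢
  refine (isAdditiveOn_mixture _ _ _).eqOn_of_apply_atom hg.isAdditiveOn fun s => ?_
  rw [atom_triple]
  exact mixture_gluedWeight_inf_lit_left E hE (subalgClosure_triple x y z ▸ hg) hh hgh _ _ _

include hE hg hh hgh in
theorem eqOn_mixture_gluedWeight_right :
    Set.EqOn (mixture E (gluedWeight x y z t g h)) h (subalgClosure {x, y, t}) := by
  rw [subalgClosure_triple] at hh ⊢
  refine (isAdditiveOn_mixture _ _ _).eqOn_of_apply_atom hh.isAdditiveOn fun s => ?_
  rw [atom_triple]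
  exact mixture_gluedWeight_inf_lit_right E hE hg (subalgClosure_triple x y t ▸ hh) hgh _ _ _

end Gluing

theorem exists_isNormMeasure_eqOn {x y z t : B} {g h : B → ℝ}
    (hind : ∀ a b c d : Bool, ∃ e : BoundedLatticeHom B Bool,
      e x = a ∧ e y = b ∧ e z = c ∧ e t = d)
    (hg : IsMeasureOn g (subalgClosure {x, y, z})) (hh : IsMeasureOn h (subalgClosure {x, y, t}))
    (hgh : ∀ u ∈ subalgClosure {x, y}, g u = h u) :
    ∃ μ : B → ℝ, IsNormMeasure μ ∧ Set.EqOn μ g (subalgClosure {x, y, z}) ∧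
      Set.EqOn μ h (subalgClosure {x, y, t}) := by
  choose E hE using fun ω : Bool × Bool × Bool × Bool => hind ω.1 ω.2.1 ω.2.2.1 ω.2.2.2
  have hleft := eqOn_mixture_gluedWeight_left E hE hg hh hgh
  refine ⟨mixture E (gluedWeight x y z t g h),
    ⟨mixture_nonneg _ _ (gluedWeight_nonneg hg hh),
      fun u v => isAdditiveOn_mixture _ _ Set.univ u trivial v trivial,
      (hleft top_mem_subalgClosure).trans hg.2.2⟩,
    hleft, eqOn_mixture_gluedWeight_right E hE hg hh hgh⟩

end Fine

open Fine in
theorem stmt9_general (B : Type*) [BooleanAlgebra B] (A : Fin 4 → B)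
    (hA : IsFreelyGeneratedBy A) (f : B → ℝ) :
    (∃ μ : B → ℝ, IsNormMeasure μ ∧
        ∀ x ∈ subalgClosure {A 0, A 2} ∪ subalgClosure {A 1, A 2} ∪
            subalgClosure {A 0, A 3} ∪ subalgClosure {A 1, A 3}, μ x = f x) ↔
    (∃ g h : B → ℝ,
        IsMeasureOn g (subalgClosure {A 0, A 1, A 2}) ∧
        IsMeasureOn h (subalgClosure {A 0, A 1, A 3}) ∧
        (∀ x ∈ subalgClosure {A 0, A 2} ∪ subalgClosure {A 1, A 2}, g x = f x) ∧
        (∀ x ∈ subalgClosure {A 0, A 3} ∪ subalgClosure {A 1, A 3}, h x = f x) ∧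
        (∀ x ∈ subalgClosure {A 0, A 1}, g x = h x)) := by
  constructor
  · rintro ⟨μ, hμ, hμf⟩
    exact ⟨μ, μ, hμ.isMeasureOn _, hμ.isMeasureOn _,
      fun x hx => hμf x (.inl (.inl hx)), fun x hx => hμf x (hx.imp (.inr ·) id),
      fun _ _ => rfl⟩
  · rintro ⟨g, h, hg, hh, hgf, hhf, hgh⟩
    have h02 : {A 0, A 2} ⊆ ({A 0, A 1, A 2} : Set B) := by simp [Set.insert_subset_iff]
    have h03 : {A 0, A 3} ⊆ ({A 0, A 1, A 3} : Set B) := by simp [Set.insert_subset_iff]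
    have hind (a b c d : Bool) : ∃ e : BoundedLatticeHom B Bool,
        e (A 0) = a ∧ e (A 1) = b ∧ e (A 2) = c ∧ e (A 3) = d :=
      let ⟨e, he, _⟩ := hA Bool ![a, b, c, d]
      ⟨e, he 0, he 1, he 2, he 3⟩
    obtain ⟨μ, hμ, hμg, hμh⟩ := exists_isNormMeasure_eqOn hind hg hh hgh
    refine ⟨μ, hμ, ?_⟩
    rintro x (((hx | hx) | hx) | hx)
    · exact (hμg (subalgClosure_mono h02 hx)).trans (hgf x (.inl hx))
    · exact (hμg (subalgClosure_mono (by simp) hx)).trans (hgf x (.inr hx))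
    · exact (hμh (subalgClosure_mono h03 hx)).trans (hhf x (.inl hx))
    · exact (hμh (subalgClosure_mono (by simp) hx)).trans (hhf x (.inr hx))

/-- Fine's theorem in Boolean form. `B` free on `A_1, A_2, A_3, A_4`; `f` restricts to
normalized measures on `B_13, B_23, B_14, B_24`. Then `f` extends to a normalized measure
on `B` iff there are normalized measures on `B_123` and `B_124` extending the respective
restrictions of `f` and agreeing on `B_12`. -/
theorem stmt9 (B : Type*) [BooleanAlgebra B] (A : Fin 4 → B)
    (hA : IsFreelyGeneratedBy A) (f : B → ℝ)
    (h13 : IsMeasureOn f (subalgClosure {A 0, A 2}))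
    (h23 : IsMeasureOn f (subalgClosure {A 1, A 2}))
    (h14 : IsMeasureOn f (subalgClosure {A 0, A 3}))
    (h24 : IsMeasureOn f (subalgClosure {A 1, A 3})) :
    (∃ μ : B → ℝ, IsNormMeasure μ ∧
        ∀ x ∈ subalgClosure {A 0, A 2} ∪ subalgClosure {A 1, A 2} ∪
            subalgClosure {A 0, A 3} ∪ subalgClosure {A 1, A 3}, μ x = f x) ↔
    (∃ g h : B → ℝ,
        IsMeasureOn g (subalgClosure {A 0, A 1, A 2}) ∧
        IsMeasureOn h (subalgClosure {A 0, A 1, A 3}) ∧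
        (∀ x ∈ subalgClosure {A 0, A 2} ∪ subalgClosure {A 1, A 2}, g x = f x) ∧
        (∀ x ∈ subalgClosure {A 0, A 3} ∪ subalgClosure {A 1, A 3}, h x = f x) ∧
        (∀ x ∈ subalgClosure {A 0, A 1}, g x = h x)) :=
  stmt9_general B A hA f
end

section
/- (Correlation polytope criterion) Let B be freely generated by A_1,…,A_n, X a set of meets of distinct generators containing all the generators, and f : X → [0,1]. Then f extends to a normalized measure on B if and only if the vector p = (f(A_{i_1} ∩ … ∩ A_{i_k}))_{elements of X} is a convex combination of the 2^n vectors u_ε with components ε_{i_1}·…·ε_{i_k}, for ε ∈ {0,1}^n. -/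
open Finset Function

namespace IsNormMeasure

variable {B : Type*} [BooleanAlgebra B] {m : B → ℝ}

lemma map_bot (hm : IsNormMeasure m) : m ⊥ = 0 := by
  have h := hm.2.1 ⊥ ⊥ (inf_bot_eq ⊥)
  rw [bot_sup_eq] at h
  linarith

lemma map_finset_sup (hm : IsNormMeasure m) {ι : Type*} (s : Finset ι) (g : ι → B)
    (hg : (s : Set ι).PairwiseDisjoint g) : m (s.sup g) = ∑ i ∈ s, m (g i) := by
  classical
  induction s using Finset.induction with
  | empty => simpa using hm.map_bot
  | insert a s ha ih =>
    rw [coe_insert, Set.pairwiseDisjoint_insert_of_notMem (by exact_mod_cast ha)] at hg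
    have hdisj : Disjoint (g a) (s.sup g) := Finset.disjoint_sup_right.2 hg.2
    rw [sup_insert, sum_insert ha, hm.2.1 _ _ (disjoint_iff.1 hdisj), ih hg.1]

lemma map_eq_sum_inf {ι : Type*} [Fintype ι] (hm : IsNormMeasure m) {g : ι → B}
    (hg : Pairwise (Disjoint on g)) (htop : univ.sup g = ⊤) (x : B) :
    m x = ∑ i, m (x ⊓ g i) := by
  have hx : x = univ.sup fun i => x ⊓ g i := by rw [← sup_inf_distrib_left, htop, inf_top_eq]
  conv_lhs => rw [hx]
  exact hm.map_finset_sup _ _ fun i _ j _ hij => (hg hij).mono inf_le_right inf_le_right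

end IsNormMeasure

lemma isNormMeasure_sum_mul {B ι : Type*} [BooleanAlgebra B] [Fintype ι] {w : ι → ℝ}
    (hw₀ : ∀ i, 0 ≤ w i) (hw₁ : ∑ i, w i = 1) {m : ι → B → ℝ}
    (hm : ∀ i, IsNormMeasure (m i)) : IsNormMeasure fun x => ∑ i, w i * m i x := by
  refine ⟨fun x => sum_nonneg fun i _ => mul_nonneg (hw₀ i) ((hm i).1 x), fun x y hxy => ?_, ?_⟩
  · simp only [(hm _).2.1 x y hxy, mul_add, sum_add_distrib]
  · simp only [(hm _).2.2, mul_one, hw₁]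

lemma isNormMeasure_boolIndicator {B : Type*} [BooleanAlgebra B]
    (φ : BoundedLatticeHom B Bool) : IsNormMeasure fun x => if φ x then (1 : ℝ) else 0 := by
  refine ⟨fun x => by positivity, fun x y hxy => ?_, by simp⟩
  have hφ : φ x ⊓ φ y = ⊥ := by rw [← map_inf, hxy, map_bot]
  simp only [map_sup]
  cases hx : φ x <;> cases hy : φ y <;> simp_all

section Atom

variable {ι B : Type*} [Fintype ι] [BooleanAlgebra B] {A : ι → B} {ε : ι → Bool} {i : ι}

def atom (A : ι → B) (ε : ι → Bool) : B :=
  univ.inf fun i => if ε i then A i else (A i)ᶜ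

lemma atom_le (h : ε i = true) : atom A ε ≤ A i := by
  simpa [atom, h] using inf_le (f := fun i => if ε i then A i else (A i)ᶜ) (mem_univ i)

lemma atom_le_compl (h : ε i = false) : atom A ε ≤ (A i)ᶜ := by
  simpa [atom, h] using inf_le (f := fun i => if ε i then A i else (A i)ᶜ) (mem_univ i)

lemma pairwise_disjoint_atom : Pairwise (Disjoint on atom A) := by
  intro ε ε' hne
  obtain ⟨i, hi⟩ := Function.ne_iff.mp hne
  cases h : ε i
  · exact (disjoint_compl_left.mono (atom_le_compl h) (atom_le (by simpa [h] using hi.symm)))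
  · exact (disjoint_compl_right.mono (atom_le h) (atom_le_compl (by simpa [h] using hi.symm)))

lemma sup_atom [DecidableEq ι] (A : ι → B) : univ.sup (atom A) = ⊤ := by
  -- distributivity expands `⨅ i, (A i ⊔ (A i)ᶜ) = ⊤` into the join of all atoms
  have h : (univ.inf fun i => (univ : Finset Bool).sup fun b => if b then A i else (A i)ᶜ) = ⊤ := by
    simp
  rw [inf_sup] at h
  refine top_le_iff.1 (h.symm.trans_le (Finset.sup_le fun g _ => ?_))
  exact (inf_attach univ fun j => if g j (mem_univ j) then A j else (A j)ᶜ).trans_le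
    (le_sup (f := atom A) (mem_univ _))

lemma finset_inf_inf_atom (s : Finset ι) (ε : ι → Bool) :
    s.inf A ⊓ atom A ε = if ∀ i ∈ s, ε i = true then atom A ε else ⊥ := by
  split_ifs with h
  · exact inf_eq_right.2 (Finset.le_inf fun i hi => atom_le (h i hi))
  · push Not at h
    obtain ⟨i, hi, hεi⟩ := h
    exact (disjoint_compl_right.mono (inf_le hi) (atom_le_compl (by simpa using hεi))).eq_bot

end Atom

namespace IsNormMeasure

variable {ι B : Type*} [Fintype ι] [DecidableEq ι] [BooleanAlgebra B] {m : B → ℝ}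

lemma sum_atom (hm : IsNormMeasure m) (A : ι → B) : ∑ ε, m (atom A ε) = 1 := by
  rw [← hm.map_finset_sup _ _ fun ε _ ε' _ h => pairwise_disjoint_atom h, sup_atom, hm.2.2]

lemma map_finset_inf (hm : IsNormMeasure m) (A : ι → B) (s : Finset ι) :
    m (s.inf A) = ∑ ε, m (atom A ε) * ∏ i ∈ s, if ε i then (1 : ℝ) else 0 := by
  rw [hm.map_eq_sum_inf pairwise_disjoint_atom (sup_atom A)]
  refine sum_congr rfl fun ε _ => ?_
  rw [finset_inf_inf_atom, prod_boole]
  split_ifs <;> simp [hm.map_bot]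

end IsNormMeasure

lemma boolIndicator_map_finset_inf {ι B : Type*} [BooleanAlgebra B] {A : ι → B} {ε : ι → Bool}
    {φ : BoundedLatticeHom B Bool} (hφ : ∀ i, φ (A i) = ε i) (s : Finset ι) :
    (if φ (s.inf A) then (1 : ℝ) else 0) = ∏ i ∈ s, if ε i then (1 : ℝ) else 0 := by
  rw [prod_boole, map_finset_inf]
  simp only [Function.comp_def, hφ]
  congr 1
  exact propext (Finset.inf_eq_top_iff ε s)

open Finset in
theorem stmt13_general {n : ℕ} (B : Type*) [BooleanAlgebra B] (A : Fin n → B)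
    (hA : IsFreelyGeneratedBy A)
    (S : Set (Finset (Fin n)))
    (f : Finset (Fin n) → ℝ) :
    (∃ μ : B → ℝ, IsNormMeasure μ ∧ ∀ s ∈ S, μ (s.inf A) = f s) ↔
    (∃ lam : (Fin n → Bool) → ℝ,
      (∀ ε, 0 ≤ lam ε) ∧ (∑ ε, lam ε) = 1 ∧
      ∀ s ∈ S, f s = ∑ ε, lam ε * ∏ i ∈ s, (if ε i then (1:ℝ) else 0)) := by
  constructor
  · rintro ⟨μ, hμ, hμf⟩
    refine ⟨fun ε => μ (atom A ε), fun ε => hμ.1 _, hμ.sum_atom A, fun s hs => ?_⟩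
    rw [← hμf s hs, hμ.map_finset_inf]
  · rintro ⟨lam, hlam₀, hlam₁, hf⟩
    choose φ hφ using fun ε => (hA Bool ε).exists
    refine ⟨fun x => ∑ ε, lam ε * (if φ ε x then 1 else 0),
      isNormMeasure_sum_mul hlam₀ hlam₁ fun ε => isNormMeasure_boolIndicator (φ ε),
      fun s hs => ?_⟩
    simp only [hf s hs, boolIndicator_map_finset_inf (hφ _)]

open Finset in
/-- Correlation polytope criterion: `B` free on `A_1, …, A_n`; `X` a set of meets of
distinct generators (encoded by the nonempty index sets `s ∈ S`) containing all the
generators; `f` an assignment of values in `[0,1]` to these meets. Then `f` extends to a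
normalized measure on `B` iff the vector `(f s)_{s ∈ S}` is a convex combination of the
`2^n` vectors `u_ε` with components `∏_{i ∈ s} ε_i`. -/
theorem stmt13 {n : ℕ} (B : Type*) [BooleanAlgebra B] (A : Fin n → B)
    (hA : IsFreelyGeneratedBy A)
    (S : Set (Finset (Fin n))) (hS1 : ∀ s ∈ S, s.Nonempty)
    (hS2 : ∀ i : Fin n, {i} ∈ S)
    (f : Finset (Fin n) → ℝ) (hf : ∀ s ∈ S, f s ∈ Set.Icc (0:ℝ) 1) :
    (∃ μ : B → ℝ, IsNormMeasure μ ∧ ∀ s ∈ S, μ (s.inf A) = f s) ↔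
    (∃ lam : (Fin n → Bool) → ℝ,
      (∀ ε, 0 ≤ lam ε) ∧ (∑ ε, lam ε) = 1 ∧
      ∀ s ∈ S, f s = ∑ ε, lam ε * ∏ i ∈ s, (if ε i then (1:ℝ) else 0)) :=
  stmt13_general B A hA S f
end

section
/- Let f be defined on a subset X of a finite Boolean algebra B with atoms a_1,…,a_k. Then f extends to a normalized measure on B if and only if there exist λ_1,…,λ_k ≥ 0 with Σ λ_i = 1 such that f = Σ λ_i (δ_{a_i})|_X, i.e. f is the restriction to X of a convex combination of the two-valued measures of B. -/
open Classical in
noncomputable def delta {B : Type*} [BooleanAlgebra B] (a x : B) : ℝ :=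
  if a ≤ x then 1 else 0

/-!
An additive function on a finite Boolean algebra is determined by its values on the atoms:
every element is the disjoint join of the atoms below it, so `μ x = ∑ₐ μ a * δₐ x`.
For a normalized measure the weights `μ a` are nonnegative and sum to `μ ⊤ = 1`.
Conversely each `δₐ` is a normalized measure, because an atom lies below a disjoint join
`x ⊔ y` iff it lies below exactly one of `x` and `y`.
-/

open Classical Finset

section

variable {B : Type*} [BooleanAlgebra B]

lemma IsAtom.le_sup_iff {a x y : B} (ha : IsAtom a) : a ≤ x ⊔ y ↔ a ≤ x ∨ a ≤ y := by
  simp only [← ha.not_disjoint_iff_le, disjoint_sup_right, not_and_or]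

lemma IsAtom.le_finset_sup_iff {ι : Type*} {a : B} (ha : IsAtom a) {s : Finset ι} {f : ι → B} :
    a ≤ s.sup f ↔ ∃ i ∈ s, a ≤ f i := by
  simp only [← ha.not_disjoint_iff_le, Finset.disjoint_sup_right, not_forall, exists_prop]

lemma delta_nonneg (a x : B) : 0 ≤ delta a x := by
  unfold delta; split <;> norm_num

lemma delta_top (a : B) : delta a ⊤ = 1 := if_pos le_top

lemma delta_sup_of_disjoint {a x y : B} (ha : IsAtom a) (h : Disjoint x y) :
    delta a (x ⊔ y) = delta a x + delta a y := by
  have not_both : ¬ (a ≤ x ∧ a ≤ y) := fun ⟨hx, hy⟩ => ha.1 (le_bot_iff.mp (h hx hy))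
  unfold delta
  by_cases hx : a ≤ x <;> by_cases hy : a ≤ y <;> simp_all [ha.le_sup_iff]

lemma isNormMeasure_sum_mul_delta [Fintype B] (lam : {a : B // IsAtom a} → ℝ)
    (hlam : ∀ a, 0 ≤ lam a) (hsum : ∑ a, lam a = 1) :
    IsNormMeasure fun x => ∑ a, lam a * delta a.1 x := by
  refine ⟨fun x => sum_nonneg fun a _ => mul_nonneg (hlam a) (delta_nonneg _ _), ?_, ?_⟩
  · intro x y hxy
    simp only [delta_sup_of_disjoint (Subtype.prop _) (disjoint_iff.mpr hxy), mul_add,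
      sum_add_distrib]
  · simpa only [delta_top, mul_one] using hsum

lemma map_bot_eq_zero_of_additive {m : B → ℝ}
    (hadd : ∀ x y : B, x ⊓ y = ⊥ → m (x ⊔ y) = m x + m y) : m ⊥ = 0 := by
  have := hadd ⊥ ⊥ (inf_idem ⊥)
  rw [sup_idem] at this
  linarith

lemma map_finset_sup_of_additive {ι : Type*} {m : B → ℝ}
    (hadd : ∀ x y : B, x ⊓ y = ⊥ → m (x ⊔ y) = m x + m y) (f : ι → B) (s : Finset ι)
    (hs : (s : Set ι).PairwiseDisjoint f) : m (s.sup f) = ∑ i ∈ s, m (f i) := by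
  induction s using Finset.cons_induction with
  | empty => simpa using map_bot_eq_zero_of_additive hadd
  | cons i s hi ih =>
    rw [coe_cons, Set.pairwiseDisjoint_insert_of_notMem (by exact_mod_cast hi)] at hs
    have hdisj : Disjoint (f i) (s.sup f) := Finset.disjoint_sup_right.mpr hs.2
    rw [sup_cons, sum_cons, hadd _ _ (disjoint_iff.mp hdisj), ih hs.1]

lemma finset_sup_atoms_le [Fintype B] (x : B) :
    ({a : {a : B // IsAtom a} | a.1 ≤ x} : Finset _).sup Subtype.val = x := by
  refine BooleanAlgebra.eq_iff_atom_le_iff.mpr fun b hb => ?_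
  rw [hb.le_finset_sup_iff]
  refine ⟨fun ⟨a, ha, hba⟩ => hba.trans (mem_filter.mp ha).2, fun hbx => ⟨⟨b, hb⟩, ?_, le_rfl⟩⟩
  simpa using hbx

lemma eq_sum_mul_delta_of_additive [Fintype B] {m : B → ℝ}
    (hadd : ∀ x y : B, x ⊓ y = ⊥ → m (x ⊔ y) = m x + m y) (x : B) :
    m x = ∑ a : {a : B // IsAtom a}, m a.1 * delta a.1 x := by
  have atoms_disjoint : (Set.univ : Set {a : B // IsAtom a}).PairwiseDisjoint Subtype.val :=
    fun a _ b _ hab => a.2.disjoint_of_ne b.2 (Subtype.val_injective.ne hab)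
  conv_lhs => rw [← finset_sup_atoms_le x]
  rw [map_finset_sup_of_additive hadd _ _ (atoms_disjoint.subset (Set.subset_univ _)),
    sum_filter]
  simp only [delta, mul_ite, mul_one, mul_zero]

end

open Classical in
/-- A function `f` on a subset `X` of a finite Boolean algebra extends to a normalized
measure on the whole algebra iff on `X` it agrees with a convex combination of the
two-valued measures `δ_a` associated to the atoms. -/
theorem stmt14 (B : Type*) [BooleanAlgebra B] [Fintype B] (X : Set B) (f : B → ℝ) :
    (∃ μ : B → ℝ, IsNormMeasure μ ∧ ∀ x ∈ X, μ x = f x) ↔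
    (∃ lam : {a : B // IsAtom a} → ℝ,
      (∀ a, 0 ≤ lam a) ∧ (∑ a, lam a) = 1 ∧
      ∀ x ∈ X, f x = ∑ a, lam a * delta a.1 x) := by
  constructor
  · rintro ⟨μ, ⟨hnonneg, hadd, htop⟩, hX⟩
    refine ⟨fun a => μ a.1, fun a => hnonneg a.1, ?_, fun x hx => ?_⟩
    · rw [eq_sum_mul_delta_of_additive hadd ⊤] at htop
      simpa only [delta_top, mul_one] using htop
    · rw [← hX x hx, ← eq_sum_mul_delta_of_additive hadd]
  · rintro ⟨lam, hlam, hsum, hf⟩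
    exact ⟨_, isNormMeasure_sum_mul_delta lam hlam hsum, fun x hx => (hf x hx).symm⟩
end

section
/- (Horn–Tarski) If f is a measure on a Boolean subalgebra B_0 of a Boolean algebra B, then the interior measure satisfies f_i(x) = sup{f(y) : y ∈ B_0, y ≤ x} and the exterior measure satisfies f_e(x) = inf{f(y) : y ∈ B_0, x ≤ y}, for every x ∈ B. -/
/-- Meet of all elements of a list. -/
def meetAll {B : Type*} [BooleanAlgebra B] (l : List B) : B := l.foldr (· ⊓ ·) ⊤

/-- Join of all `k`-fold meets of (increasing) `k`-element sublists of `l`. -/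
def kJoin {B : Type*} [BooleanAlgebra B] (k : ℕ) (l : List B) : B :=
  ((l.sublistsLen k).map meetAll).foldr (· ⊔ ·) ⊥

/-- Horn–Tarski order on sequences: `⟨A_0,…,A_{m−1}⟩ ≤ ⟨B_0,…,B_{n−1}⟩` iff for every
`k < m` the join of all `(k+1)`-fold meets of the `A`'s is below the analogous join for
the `B`'s. -/
def seqLE {B : Type*} [BooleanAlgebra B] (as bs : List B) : Prop :=
  ∀ k : ℕ, k < as.length → kJoin (k + 1) as ≤ kJoin (k + 1) bs

/-- Horn–Tarski partial measure on a subset `S` containing `⊤`. -/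
def IsPartialMeasure {B : Type*} [BooleanAlgebra B] (f : B → ℝ) (S : Set B) : Prop :=
  (⊤ : B) ∈ S ∧ f ⊤ = 1 ∧ (∀ x ∈ S, 0 ≤ f x) ∧
  ∀ as bs : List B, (∀ x ∈ as, x ∈ S) → (∀ x ∈ bs, x ∈ S) → seqLE as bs →
    (as.map f).sum ≤ (bs.map f).sum

/-- Horn–Tarski exterior measure of `x` with respect to a partial measure `f` on `S`. -/
noncomputable def extMeasure {B : Type*} [BooleanAlgebra B] (f : B → ℝ) (S : Set B)
    (x : B) : ℝ :=
  sInf {ξ : ℝ | ∃ (m : ℕ) (as bs : List B), 0 < m ∧ (∀ y ∈ as, y ∈ S) ∧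
    (∀ y ∈ bs, y ∈ S) ∧ seqLE (bs ++ List.replicate m x) as ∧
    ξ = ((as.map f).sum - (bs.map f).sum) / m}

/-- Horn–Tarski interior measure of `x` with respect to a partial measure `f` on `S`. -/
noncomputable def intMeasure {B : Type*} [BooleanAlgebra B] (f : B → ℝ) (S : Set B)
    (x : B) : ℝ :=
  sSup {ξ : ℝ | ∃ (m : ℕ) (as bs : List B), 0 < m ∧ (∀ y ∈ as, y ∈ S) ∧
    (∀ y ∈ bs, y ∈ S) ∧ seqLE as (bs ++ List.replicate m x) ∧
    ξ = ((as.map f).sum - (bs.map f).sum) / m}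

/-- `S` is the carrier of a Boolean subalgebra. -/
def IsSubalgebraSet {B : Type*} [BooleanAlgebra B] (S : Set B) : Prop :=
  (⊤ : B) ∈ S ∧ (⊥ : B) ∈ S ∧ (∀ x ∈ S, xᶜ ∈ S) ∧
  (∀ x ∈ S, ∀ y ∈ S, x ⊓ y ∈ S) ∧ (∀ x ∈ S, ∀ y ∈ S, x ⊔ y ∈ S)

/-!
A measure `f` on a Boolean subalgebra `L` is a Horn–Tarski partial measure: telescoping the
modular law gives `∑ f aᵢ = ∑ₖ f (kJoin (k + 1) a)`, and `seqLE a b` compares these sums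
termwise.

In a finite algebra let `y` be the largest element of `L` below `x`. For `bs` in `L`,
`kJoin k (bs ++ replicate m x) = P ⊔ (x ⊓ Q)` with `P, Q ∈ L` independent of `x`, and for
`c ∈ L` we have `c ≤ P ⊔ (x ⊓ Q)` iff `c \ P ≤ x ⊓ Q` iff `c ≤ P ⊔ (y ⊓ Q)`, since `c \ P ∈ L`.
So in every representation bounding `f_i x` from below, `x` may be replaced by `y`, whence
`f_i x ≤ f y`; the representation `⟨y⟩ ≤ ⟨x⟩` gives equality. The exterior measure is dual,
with `Q ⇨ c` in place of `c \ P`.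
-/

lemma SupClosed.exists_isGreatest {α : Type*} [Lattice α] {s : Set α} (hs : SupClosed s)
    (hfin : s.Finite) (hne : s.Nonempty) : ∃ a, IsGreatest s a :=
  ⟨hfin.toFinset.sup' (by simpa) id, hs.finsetSup'_mem _ (by simp),
    fun _ hb => Finset.le_sup' id (by simpa)⟩

lemma InfClosed.exists_isLeast {α : Type*} [Lattice α] {s : Set α} (hs : InfClosed s)
    (hfin : s.Finite) (hne : s.Nonempty) : ∃ a, IsLeast s a :=
  ⟨hfin.toFinset.inf' (by simpa) id, hs.finsetInf'_mem _ (by simp),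
    fun _ hb => Finset.inf'_le id (by simpa)⟩

section

variable {B : Type*} [BooleanAlgebra B]

def IsSubalgebraSet.toBooleanSubalgebra {S : Set B} (hS : IsSubalgebraSet S) :
    BooleanSubalgebra B where
  carrier := S
  supClosed' _ ha _ hb := hS.2.2.2.2 _ ha _ hb
  infClosed' _ ha _ hb := hS.2.2.2.1 _ ha _ hb
  compl_mem' := hS.2.2.1 _
  bot_mem' := hS.2.1

lemma foldr_sup_append (l₁ l₂ : List B) :
    (l₁ ++ l₂).foldr (· ⊔ ·) ⊥ = l₁.foldr (· ⊔ ·) ⊥ ⊔ l₂.foldr (· ⊔ ·) ⊥ := by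
  induction l₁ with
  | nil => simp
  | cons a l ih => simp [ih, sup_assoc]

lemma foldr_sup_map_inf (a : B) (l : List B) :
    (l.map (a ⊓ ·)).foldr (· ⊔ ·) ⊥ = a ⊓ l.foldr (· ⊔ ·) ⊥ := by
  induction l with
  | nil => simp
  | cons b l ih => simp [ih, inf_sup_left]

@[simp]
lemma kJoin_zero (l : List B) : kJoin 0 l = ⊤ := by
  simp [kJoin, meetAll]

lemma kJoin_eq_bot {k : ℕ} {l : List B} (h : l.length < k) : kJoin k l = ⊥ := by
  simp [kJoin, List.sublistsLen_of_length_lt h]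

lemma kJoin_succ_cons (k : ℕ) (a : B) (l : List B) :
    kJoin (k + 1) (a :: l) = kJoin (k + 1) l ⊔ (a ⊓ kJoin k l) := by
  have : meetAll ∘ List.cons a = (a ⊓ ·) ∘ meetAll := rfl
  rw [kJoin, List.sublistsLen_succ_cons, List.map_append, foldr_sup_append, List.map_map, this,
    ← List.map_map, foldr_sup_map_inf, kJoin, kJoin]

lemma kJoin_one_singleton (a : B) : kJoin 1 [a] = a := by
  simp [kJoin_succ_cons, kJoin_eq_bot]

lemma kJoin_succ_le (k : ℕ) (l : List B) : kJoin (k + 1) l ≤ kJoin k l := by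
  induction l generalizing k with
  | nil => simp [kJoin_eq_bot]
  | cons a l ih =>
    cases k with
    | zero => simp
    | succ k =>
      rw [kJoin_succ_cons, kJoin_succ_cons]
      exact sup_le_sup (ih _) (inf_le_inf_left _ (ih _))

lemma seqLE_singleton_of_le {a b : B} (h : a ≤ b) : seqLE [a] [b] := by
  intro k hk
  obtain rfl : k = 0 := by simpa using hk
  simpa [kJoin_one_singleton] using h

section Subalgebra

variable {L : BooleanSubalgebra B}

lemma kJoin_mem {k : ℕ} {l : List B} (hl : ∀ a ∈ l, a ∈ L) : kJoin k l ∈ L := by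
  induction l generalizing k with
  | nil => cases k <;> simp [kJoin_eq_bot]
  | cons a l ih =>
    cases k with
    | zero => simp
    | succ k =>
      simp only [List.mem_cons, forall_eq_or_imp] at hl
      rw [kJoin_succ_cons]
      exact L.sup_mem (ih hl.2) (L.inf_mem hl.1 (ih hl.2))

-- `none` entries are holes, all filled with the same `y`.
lemma exists_kJoin_map_getD_eq (l : List (Option B)) (hl : ∀ a, some a ∈ l → a ∈ L) (k : ℕ) :
    ∃ P ∈ L, ∃ Q ∈ L, ∀ y, kJoin k (l.map (·.getD y)) = P ⊔ (y ⊓ Q) := by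
  induction l generalizing k with
  | nil =>
    cases k with
    | zero => exact ⟨⊤, L.top_mem, ⊥, L.bot_mem, by simp⟩
    | succ k => exact ⟨⊥, L.bot_mem, ⊥, L.bot_mem, by simp [kJoin_eq_bot]⟩
  | cons o l ih =>
    cases k with
    | zero => exact ⟨⊤, L.top_mem, ⊥, L.bot_mem, by simp⟩
    | succ k =>
      obtain ⟨P₁, hP₁, Q₁, hQ₁, h₁⟩ := ih (fun a ha => hl a (List.mem_cons_of_mem _ ha)) (k + 1)
      obtain ⟨P₂, hP₂, Q₂, hQ₂, h₂⟩ := ih (fun a ha => hl a (List.mem_cons_of_mem _ ha)) k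
      cases o with
      | none =>
        refine ⟨P₁, hP₁, Q₁ ⊔ (P₂ ⊔ Q₂), L.sup_mem hQ₁ (L.sup_mem hP₂ hQ₂), fun y => ?_⟩
        rw [List.map_cons, kJoin_succ_cons, h₁, h₂]
        simp [inf_sup_left, sup_assoc]
      | some a =>
        have ha := hl a List.mem_cons_self
        refine ⟨P₁ ⊔ a ⊓ P₂, L.sup_mem hP₁ (L.inf_mem ha hP₂), Q₁ ⊔ a ⊓ Q₂,
          L.sup_mem hQ₁ (L.inf_mem ha hQ₂), fun y => ?_⟩
        rw [List.map_cons, kJoin_succ_cons, h₁, h₂]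
        simp [inf_sup_left, sup_assoc, sup_left_comm, inf_left_comm]

lemma exists_kJoin_append_replicate_eq {bs : List B} (hbs : ∀ b ∈ bs, b ∈ L) (m k : ℕ) :
    ∃ P ∈ L, ∃ Q ∈ L, ∀ y, kJoin k (bs ++ List.replicate m y) = P ⊔ (y ⊓ Q) := by
  obtain ⟨P, hP, Q, hQ, h⟩ :=
    exists_kJoin_map_getD_eq (bs.map some ++ List.replicate m none) (by simpa using hbs) k
  exact ⟨P, hP, Q, hQ, fun y => by simpa [List.map_replicate] using h y⟩

namespace IsMeasureOn

variable {f : B → ℝ} (hf : IsMeasureOn f L) {u v : B}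
include hf

lemma map_bot : f ⊥ = 0 := by
  simpa using hf.2.1 ⊤ L.top_mem ⊥ L.bot_mem (inf_bot_eq _)

lemma map_add_map_sdiff (hu : u ∈ L) (hv : v ∈ L) : f u + f (v \ u) = f (u ⊔ v) := by
  rw [← hf.2.1 u hu _ (L.sdiff_mem hv hu) disjoint_sdiff_self_right.eq_bot, sup_sdiff_self_right]

lemma mono (hu : u ∈ L) (hv : v ∈ L) (h : u ≤ v) : f u ≤ f v := by
  have := hf.1 _ (L.sdiff_mem hv hu)
  rw [← sup_eq_right.2 h, ← hf.map_add_map_sdiff hu hv]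
  linarith

lemma map_sup_add_map_inf (hu : u ∈ L) (hv : v ∈ L) : f (u ⊔ v) + f (u ⊓ v) = f u + f v := by
  have hv' : f (v ⊓ u) + f (v \ u) = f v := by
    rw [← hf.2.1 _ (L.inf_mem hv hu) _ (L.sdiff_mem hv hu) disjoint_inf_sdiff.eq_bot,
      sup_inf_sdiff]
  rw [← hf.map_add_map_sdiff hu hv, inf_comm]
  linarith

lemma map_kJoin_succ_cons {a : B} {l : List B} (ha : a ∈ L) (hl : ∀ b ∈ l, b ∈ L) (k : ℕ) :
    f (kJoin (k + 1) (a :: l)) =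
      f (kJoin (k + 1) l) + f (a ⊓ kJoin k l) - f (a ⊓ kJoin (k + 1) l) := by
  have hinf : kJoin (k + 1) l ⊓ (a ⊓ kJoin k l) = a ⊓ kJoin (k + 1) l := by
    rw [inf_left_comm, inf_eq_left.2 (kJoin_succ_le k l)]
  have := hf.map_sup_add_map_inf (kJoin_mem hl (k := k + 1)) (L.inf_mem ha (kJoin_mem hl (k := k)))
  rw [kJoin_succ_cons, ← hinf]
  linarith

lemma sum_map_eq_sum_kJoin {l : List B} (hl : ∀ b ∈ l, b ∈ L) {N : ℕ} (hN : l.length ≤ N) :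
    (l.map f).sum = ∑ k ∈ Finset.range N, f (kJoin (k + 1) l) := by
  induction l generalizing N with
  | nil => simp [kJoin_eq_bot, hf.map_bot]
  | cons a l ih =>
    simp only [List.mem_cons, forall_eq_or_imp] at hl
    obtain ⟨N, rfl⟩ : ∃ n, N = n + 1 := Nat.exists_eq_succ_of_ne_zero (by simp at hN; omega)
    have hlN : l.length < N + 1 := by simpa using hN
    simp only [hf.map_kJoin_succ_cons hl.1 hl.2, add_sub_assoc, Finset.sum_add_distrib,
      Finset.sum_range_sub', Finset.sum_range_succ, kJoin_eq_bot hlN, List.map_cons, List.sum_cons,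
      ih hl.2 (Nat.le_of_lt_succ hlN), hf.map_bot, kJoin_zero, inf_top_eq, inf_bot_eq]
    ring

theorem isPartialMeasure : IsPartialMeasure f L := by
  refine ⟨L.top_mem, hf.2.2, hf.1, fun as bs has hbs h => ?_⟩
  rw [hf.sum_map_eq_sum_kJoin has (le_max_left as.length bs.length),
    hf.sum_map_eq_sum_kJoin hbs (le_max_right as.length bs.length)]
  refine Finset.sum_le_sum fun k _ => ?_
  by_cases hk : k < as.length
  · exact hf.mono (kJoin_mem has) (kJoin_mem hbs) (h k hk)
  · rw [kJoin_eq_bot (by omega), hf.map_bot]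
    exact hf.1 _ (kJoin_mem hbs)

end IsMeasureOn

end Subalgebra

lemma BooleanSubalgebra.exists_isGreatest_inter_Iic [Finite B] (L : BooleanSubalgebra B) (x : B) :
    ∃ y, IsGreatest (L ∩ Set.Iic x) y :=
  SupClosed.exists_isGreatest (fun _ ha _ hb => ⟨L.sup_mem ha.1 hb.1, sup_le ha.2 hb.2⟩)
    (Set.toFinite _) ⟨⊥, L.bot_mem, bot_le⟩

lemma BooleanSubalgebra.exists_isLeast_inter_Ici [Finite B] (L : BooleanSubalgebra B) (x : B) :
    ∃ y, IsLeast (L ∩ Set.Ici x) y :=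
  InfClosed.exists_isLeast (fun _ ha _ hb => ⟨L.inf_mem ha.1 hb.1, le_inf ha.2 hb.2⟩)
    (Set.toFinite _) ⟨⊤, L.top_mem, le_top⟩

lemma IsPartialMeasure.monotoneOn {f : B → ℝ} {S : Set B} (hf : IsPartialMeasure f S) :
    MonotoneOn f S := fun u hu v hv huv => by
  simpa using hf.2.2.2 [u] [v] (by simpa) (by simpa) (seqLE_singleton_of_le huv)

variable {L : BooleanSubalgebra B} {f : B → ℝ} {as bs : List B} {m : ℕ} {x y : B}

lemma seqLE_append_replicate_of_isGreatest (has : ∀ a ∈ as, a ∈ L) (hbs : ∀ b ∈ bs, b ∈ L)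
    (hy : IsGreatest (L ∩ Set.Iic x) y) (h : seqLE as (bs ++ List.replicate m x)) :
    seqLE as (bs ++ List.replicate m y) := by
  intro k hk
  obtain ⟨P, hP, Q, -, hPQ⟩ := exists_kJoin_append_replicate_eq hbs m (k + 1)
  have hx := h k hk
  rw [hPQ] at hx ⊢
  rw [← sdiff_le_iff, le_inf_iff] at hx ⊢
  exact ⟨hy.2 ⟨L.sdiff_mem (kJoin_mem has) hP, hx.1⟩, hx.2⟩

lemma seqLE_append_replicate_of_isLeast (has : ∀ a ∈ as, a ∈ L) (hbs : ∀ b ∈ bs, b ∈ L)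
    (hy : IsLeast (L ∩ Set.Ici x) y) (h : seqLE (bs ++ List.replicate m x) as) :
    seqLE (bs ++ List.replicate m y) as := by
  intro k hk
  obtain ⟨P, -, Q, hQ, hPQ⟩ := exists_kJoin_append_replicate_eq hbs m (k + 1)
  have hx := h k (by simpa using hk)
  rw [hPQ] at hx ⊢
  rw [sup_le_iff, ← le_himp_iff] at hx ⊢
  exact ⟨hx.1, hy.2 ⟨L.himp_mem hQ (kJoin_mem has), hx.2⟩⟩

lemma append_replicate_mem (hbs : ∀ b ∈ bs, b ∈ L) (hy : y ∈ L) :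
    ∀ a ∈ bs ++ List.replicate m y, a ∈ L := by
  simp only [List.mem_append, List.mem_replicate]
  rintro a (ha | ⟨-, rfl⟩)
  exacts [hbs a ha, hy]

theorem intMeasure_eq_of_isGreatest (hf : IsPartialMeasure f L)
    (hy : IsGreatest (L ∩ Set.Iic x) y) : intMeasure f L x = f y := by
  refine IsGreatest.csSup_eq ⟨⟨1, [y], [], one_pos, by simpa using hy.1.1, by simp,
    by simpa using seqLE_singleton_of_le hy.1.2, by simp⟩, ?_⟩
  rintro _ ⟨m, as, bs, hm, has, hbs, h, rfl⟩
  have hsum := hf.2.2.2 as _ has (append_replicate_mem hbs hy.1.1)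
    (seqLE_append_replicate_of_isGreatest has hbs hy h)
  simp only [List.map_append, List.map_replicate, List.sum_append, List.sum_replicate,
    nsmul_eq_mul] at hsum
  rw [div_le_iff₀ (by exact_mod_cast hm)]
  linarith

theorem extMeasure_eq_of_isLeast (hf : IsPartialMeasure f L)
    (hy : IsLeast (L ∩ Set.Ici x) y) : extMeasure f L x = f y := by
  refine IsLeast.csInf_eq ⟨⟨1, [y], [], one_pos, by simpa using hy.1.1, by simp,
    by simpa using seqLE_singleton_of_le hy.1.2, by simp⟩, ?_⟩
  rintro _ ⟨m, as, bs, hm, has, hbs, h, rfl⟩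
  have hsum := hf.2.2.2 _ as (append_replicate_mem hbs hy.1.1) has
    (seqLE_append_replicate_of_isLeast has hbs hy h)
  simp only [List.map_append, List.map_replicate, List.sum_append, List.sum_replicate,
    nsmul_eq_mul] at hsum
  rw [le_div_iff₀ (by exact_mod_cast hm)]
  linarith

end

/-- Horn–Tarski: if `f` is a measure on a Boolean subalgebra `B_0` (carrier `S`) of a
finite Boolean algebra `B`, then the interior measure of `x` is `sup{f y : y ∈ S, y ≤ x}`
and the exterior measure is `inf{f y : y ∈ S, x ≤ y}`. -/
theorem stmt15 (B : Type*) [BooleanAlgebra B] [Fintype B] (S : Set B)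
    (hS : IsSubalgebraSet S) (f : B → ℝ) (hf : IsMeasureOn f S) (x : B) :
    intMeasure f S x = sSup {r : ℝ | ∃ y ∈ S, y ≤ x ∧ r = f y} ∧
    extMeasure f S x = sInf {r : ℝ | ∃ y ∈ S, x ≤ y ∧ r = f y} := by
  obtain ⟨L, rfl⟩ : ∃ L : BooleanSubalgebra B, (L : Set B) = S := ⟨hS.toBooleanSubalgebra, rfl⟩
  have hpm := hf.isPartialMeasure
  obtain ⟨y, hy⟩ := L.exists_isGreatest_inter_Iic x
  obtain ⟨z, hz⟩ := L.exists_isLeast_inter_Ici x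
  have hsup : IsGreatest {r | ∃ w ∈ (L : Set B), w ≤ x ∧ r = f w} (f y) :=
    ⟨⟨y, hy.1.1, hy.1.2, rfl⟩, by
      rintro _ ⟨w, hw, hwx, rfl⟩
      exact hpm.monotoneOn hw hy.1.1 (hy.2 ⟨hw, hwx⟩)⟩
  have hinf : IsLeast {r | ∃ w ∈ (L : Set B), x ≤ w ∧ r = f w} (f z) :=
    ⟨⟨z, hz.1.1, hz.1.2, rfl⟩, by
      rintro _ ⟨w, hw, hxw, rfl⟩
      exact hpm.monotoneOn hz.1.1 hw (hz.2 ⟨hw, hxw⟩)⟩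
  rw [intMeasure_eq_of_isGreatest hpm hy, extMeasure_eq_of_isLeast hpm hz, hsup.csSup_eq,
    hinf.csInf_eq]
  exact ⟨rfl, rfl⟩
end

section
/- (Horn–Tarski extension to one more point) Let f be a partial measure on S ⊆ B, x ∈ B, and g a function on S ∪ {x} coinciding with f on S. Then g is a partial measure on S ∪ {x} if and only if f_i(x) ≤ g(x) ≤ f_e(x). -/
namespace HT
variable {B : Type*} [BooleanAlgebra B]

def J : ℕ → List B → B
  | 0, _ => ⊤
  | _+1, [] => ⊥
  | k+1, a :: l => J (k+1) l ⊔ (a ⊓ J k l)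

@[simp] lemma J_zero (l : List B) : J 0 l = ⊤ := by cases l <;> rfl
@[simp] lemma J_nil (k : ℕ) : J (k+1) ([] : List B) = ⊥ := rfl
@[simp] lemma J_cons (k : ℕ) (a : B) (l : List B) :
    J (k+1) (a :: l) = J (k+1) l ⊔ (a ⊓ J k l) := rfl

lemma foldr_sup_append (l1 l2 : List B) :
    (l1 ++ l2).foldr (· ⊔ ·) ⊥ = l1.foldr (· ⊔ ·) ⊥ ⊔ l2.foldr (· ⊔ ·) ⊥ := by
  induction l1 with
  | nil => simp
  | cons a l ih => simp [ih, sup_assoc]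

lemma foldr_sup_map_inf (a : B) (l : List B) :
    (l.map (fun s => a ⊓ s)).foldr (· ⊔ ·) ⊥ = a ⊓ l.foldr (· ⊔ ·) ⊥ := by
  induction l with
  | nil => simp
  | cons b l ih => simp [ih, inf_sup_left]

lemma kJoin_eq_J (k : ℕ) (l : List B) : kJoin k l = J k l := by
  induction l generalizing k with
  | nil =>
    cases k with
    | zero => simp [kJoin, List.sublistsLen_zero, meetAll]
    | succ k => simp [kJoin, List.sublistsLen_succ_nil]
  | cons a l ih =>
    cases k with
    | zero => simp [kJoin, List.sublistsLen_zero, meetAll]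
    | succ k =>
      rw [kJoin, List.sublistsLen_succ_cons, List.map_append, foldr_sup_append]
      rw [J_cons, ← ih (k+1), ← ih k, kJoin, kJoin]
      congr 1
      rw [List.map_map]
      have : (meetAll ∘ List.cons a : List B → B) = (fun s => a ⊓ meetAll s) := by
        funext s; simp [meetAll]
      rw [this, ← foldr_sup_map_inf, List.map_map]
      rfl

lemma J_eq_bot_of_lt {k : ℕ} {l : List B} (h : l.length < k) : J k l = ⊥ := by
  induction l generalizing k with
  | nil => cases k with
    | zero => omega
    | succ k => rfl
  | cons a l ih =>
    cases k with
    | zero => omega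
    | succ k =>
      simp at h
      rw [J_cons, ih (by omega), ih (by omega)]
      simp

lemma J_antitone (k : ℕ) (l : List B) : J (k+1) l ≤ J k l := by
  induction l generalizing k with
  | nil => cases k <;> simp
  | cons a l ih =>
    cases k with
    | zero => simp
    | succ k =>
      rw [J_cons, J_cons]
      exact sup_le_sup (ih (k+1)) (inf_le_inf_left a (ih k))

lemma seqLE_iff (as bs : List B) : seqLE as bs ↔ ∀ k : ℕ, J (k+1) as ≤ J (k+1) bs := by
  constructor
  · intro h k
    by_cases hk : k < as.length
    · rw [← kJoin_eq_J, ← kJoin_eq_J]; exact h k hk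
    · rw [J_eq_bot_of_lt (by omega)]; exact bot_le
  · intro h k _
    rw [kJoin_eq_J, kJoin_eq_J]; exact h k

lemma J_perm {l1 l2 : List B} (h : l1.Perm l2) (k : ℕ) : J k l1 = J k l2 := by
  induction h generalizing k with
  | nil => rfl
  | cons a h ih =>
    cases k with
    | zero => simp
    | succ k => rw [J_cons, J_cons, ih, ih]
  | swap a b l =>
    cases k with
    | zero => simp
    | succ k =>
      cases k with
      | zero => simp [sup_comm, sup_assoc, sup_left_comm]
      | succ k =>
        simp only [J_cons]
        rw [inf_sup_left, inf_sup_left, ← inf_assoc, ← inf_assoc, inf_comm b a]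
        rw [sup_assoc, sup_assoc, sup_left_comm (a ⊓ J (k+1) l)]
  | trans h1 h2 ih1 ih2 => rw [ih1, ih2]

lemma seqLE_perm {a a' b b' : List B} (ha : a.Perm a') (hb : b.Perm b')
    (h : seqLE a b) : seqLE a' b' := by
  rw [seqLE_iff] at h ⊢
  intro k
  rw [← J_perm ha, ← J_perm hb]
  exact h k

end HT

namespace HT
variable {B : Type*} [BooleanAlgebra B]

lemma J_le_cons (i : ℕ) (a : B) (l : List B) : J i l ≤ J i (a :: l) := by
  cases i with
  | zero => simp
  | succ i => rw [J_cons]; exact le_sup_left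

lemma J_append (l1 l2 : List B) (k : ℕ) :
    J k (l1 ++ l2) = (Finset.range (k+1)).sup (fun i => J i l1 ⊓ J (k-i) l2) := by
  induction l1 generalizing k with
  | nil =>
    simp only [List.nil_append]
    apply le_antisymm
    · have h0 : (0:ℕ) ∈ Finset.range (k+1) := by simp
      refine le_trans ?_ (Finset.le_sup h0)
      simp
    · apply Finset.sup_le
      intro i _
      cases i with
      | zero => simp
      | succ i => simp
  | cons a l ih =>
    cases k with
    | zero => simp
    | succ k =>
      rw [List.cons_append, J_cons, ih (k+1), ih k, Finset.sup_inf_distrib_left]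
      apply le_antisymm
      · apply sup_le
        · apply Finset.sup_le
          intro i hi
          refine le_trans (inf_le_inf_right _ (J_le_cons i a l))
            (Finset.le_sup (f := fun i => J i (a :: l) ⊓ J (k+1-i) l2) hi)
        · apply Finset.sup_le
          intro j hj
          simp only [Finset.mem_range] at hj
          have hm : j + 1 ∈ Finset.range (k+1+1) := by simp; omega
          refine le_trans ?_ (Finset.le_sup hm)
          have h1 : a ⊓ J j l ≤ J (j+1) (a :: l) := by rw [J_cons]; exact le_sup_right
          have h2 : (k+1) - (j+1) = k - j := by omega
          rw [h2, ← inf_assoc]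
          exact inf_le_inf_right _ h1
      · apply Finset.sup_le
        intro i hi
        simp only [Finset.mem_range] at hi
        cases i with
        | zero =>
          have h0 : (0:ℕ) ∈ Finset.range (k+1+1) := by simp
          refine le_trans ?_ (le_sup_of_le_left (Finset.le_sup h0))
          simp
        | succ j =>
          rw [J_cons, inf_sup_right]
          apply sup_le
          · have hm : j + 1 ∈ Finset.range (k+1+1) := by simp; omega
            exact le_sup_of_le_left (Finset.le_sup (f := fun i => J i l ⊓ J (k+1-i) l2) hm)
          · have hm : j ∈ Finset.range (k+1) := by simp; omega
            have h2 : (k+1) - (j+1) = k - j := by omega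
            rw [h2, inf_assoc]
            exact le_sup_of_le_right (Finset.le_sup (f := fun i => a ⊓ (J i l ⊓ J (k-i) l2)) hm)

lemma J_singleton_succ_succ (c : B) (i : ℕ) : J (i+2) [c] = ⊥ :=
  J_eq_bot_of_lt (by simp)

lemma J_one_singleton (c : B) : J 1 [c] = c := by simp

lemma J_append_single (u : List B) (c : B) (k : ℕ) :
    J (k+1) (u ++ [c]) = J (k+1) u ⊔ (J k u ⊓ c) := by
  rw [J_append]
  apply le_antisymm
  · apply Finset.sup_le
    intro i hi
    simp only [Finset.mem_range] at hi
    rcases Nat.lt_or_ge i k with h | h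
    · have : k + 1 - i = (k - i - 1) + 2 := by omega
      rw [this, J_singleton_succ_succ]
      simp
    · rcases Nat.eq_or_lt_of_le h with rfl | h'
      · have : k + 1 - k = 1 := by omega
        rw [this, J_one_singleton]
        exact le_sup_right
      · have hik : i = k + 1 := by omega
        subst hik
        simp
  · apply sup_le
    · have hm : k + 1 ∈ Finset.range (k+2) := by simp
      refine le_trans ?_ (Finset.le_sup hm)
      simp
    · have hm : k ∈ Finset.range (k+2) := by simp
      refine le_trans ?_ (Finset.le_sup hm)
      have : k + 1 - k = 1 := by omega
      rw [this, J_one_singleton]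

lemma cancel_one {u v : List B} {c : B}
    (h : ∀ k : ℕ, J (k+1) (u ++ [c]) ≤ J (k+1) (v ++ [c])) :
    ∀ k : ℕ, J (k+1) u ≤ J (k+1) v := by
  intro k
  have hA := h k
  have hB := h (k+1)
  rw [J_append_single, J_append_single] at hA hB
  have claim1 : J (k+1) u ⊓ cᶜ ≤ J (k+1) v := by
    calc J (k+1) u ⊓ cᶜ ≤ (J (k+1) v ⊔ (J k v ⊓ c)) ⊓ cᶜ :=
          inf_le_inf_right _ (le_trans le_sup_left hA)
      _ = (J (k+1) v ⊓ cᶜ) ⊔ (J k v ⊓ c ⊓ cᶜ) := by rw [inf_sup_right]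
      _ ≤ J (k+1) v := by
          apply sup_le inf_le_left
          rw [inf_assoc, inf_compl_eq_bot, inf_bot_eq]
          exact bot_le
  have claim2 : J (k+1) u ⊓ c ≤ J (k+1) v := by
    calc J (k+1) u ⊓ c ≤ J (k+2) v ⊔ (J (k+1) v ⊓ c) := le_trans le_sup_right hB
      _ ≤ J (k+1) v := sup_le (J_antitone _ _) inf_le_left
  calc J (k+1) u = (J (k+1) u ⊓ c) ⊔ (J (k+1) u ⊓ cᶜ) := by
        rw [← inf_sup_left, sup_compl_eq_top, inf_top_eq]
    _ ≤ J (k+1) v := sup_le claim2 claim1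

lemma seqLE_all {u v : List B} (h : seqLE u v) : ∀ i : ℕ, J i u ≤ J i v := by
  intro i
  cases i with
  | zero => simp
  | succ i => exact (seqLE_iff u v).1 h i

lemma seqLE_cancel_replicate {u v : List B} {c : B} (q : ℕ)
    (h : seqLE (u ++ List.replicate q c) (v ++ List.replicate q c)) : seqLE u v := by
  induction q generalizing u v with
  | zero => simpa using h
  | succ q ih =>
    apply ih
    rw [seqLE_iff]
    intro k
    apply cancel_one (u := u ++ List.replicate q c) (v := v ++ List.replicate q c)
    intro j
    have e : ∀ w : List B, (w ++ List.replicate q c) ++ [c] = w ++ List.replicate (q+1) c := by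
      intro w
      rw [List.append_assoc, ← List.replicate_succ' (n := q)]
    rw [e, e]
    exact seqLE_all h (j+1)

lemma seqLE_add {u v u' v' : List B} (h : seqLE u v) (h' : seqLE u' v') :
    seqLE (u ++ u') (v ++ v') := by
  rw [seqLE_iff]
  intro k
  rw [J_append, J_append]
  apply Finset.sup_le
  intro i hi
  exact le_trans (inf_le_inf (seqLE_all h i) (seqLE_all h' (k+1-i)))
    (Finset.le_sup (f := fun i => J i v ⊓ J (k+1-i) v') hi)

/-- `n`-fold repetition of a list. -/
def repList : ℕ → List B → List B
  | 0, _ => []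
  | n+1, u => u ++ repList n u

lemma repList_mem {n : ℕ} {u : List B} {y : B} (h : y ∈ repList n u) : y ∈ u := by
  induction n with
  | zero => simp [repList] at h
  | succ n ih =>
    simp only [repList, List.mem_append] at h
    exact h.elim id ih

lemma seqLE_repList {u v : List B} (h : seqLE u v) (n : ℕ) :
    seqLE (repList n u) (repList n v) := by
  induction n with
  | zero =>
    intro k hk
    simp [repList] at hk
  | succ n ih => exact seqLE_add h ih

lemma repList_replicate (n m : ℕ) (c : B) :
    repList n (List.replicate m c) = List.replicate (n * m) c := by
  induction n with
  | zero => simp [repList]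
  | succ n ih =>
    rw [repList, ih, ← List.replicate_add]
    congr 1
    ring

lemma repList_append_perm (n : ℕ) (p q : List B) :
    (repList n (p ++ q)).Perm (repList n p ++ repList n q) := by
  rw [← Multiset.coe_eq_coe]
  induction n with
  | zero => simp [repList]
  | succ n ih =>
    show ((((p ++ q) ++ repList n (p ++ q) : List B)) : Multiset B) = _
    have e1 : ∀ u v : List B, ((u ++ v : List B) : Multiset B) = (u : Multiset B) + v := by
      intro u v; rfl
    simp only [repList, e1, ih]
    abel

lemma repList_sum (f : B → ℝ) (n : ℕ) (u : List B) :
    ((repList n u).map f).sum = n * (u.map f).sum := by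
  induction n with
  | zero => simp [repList]
  | succ n ih =>
    rw [repList, List.map_append, List.sum_append, ih]
    push_cast
    ring

end HT

namespace HT
variable {B : Type*} [BooleanAlgebra B]

/-- The defining set of `intMeasure`. -/
def intSet (f : B → ℝ) (S : Set B) (x : B) : Set ℝ :=
  {ξ : ℝ | ∃ (m : ℕ) (as bs : List B), 0 < m ∧ (∀ y ∈ as, y ∈ S) ∧
    (∀ y ∈ bs, y ∈ S) ∧ seqLE as (bs ++ List.replicate m x) ∧
    ξ = ((as.map f).sum - (bs.map f).sum) / m}

/-- The defining set of `extMeasure`. -/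
def extSet (f : B → ℝ) (S : Set B) (x : B) : Set ℝ :=
  {ξ : ℝ | ∃ (m : ℕ) (as bs : List B), 0 < m ∧ (∀ y ∈ as, y ∈ S) ∧
    (∀ y ∈ bs, y ∈ S) ∧ seqLE (bs ++ List.replicate m x) as ∧
    ξ = ((as.map f).sum - (bs.map f).sum) / m}

lemma intMeasure_eq (f : B → ℝ) (S : Set B) (x : B) :
    intMeasure f S x = sSup (intSet f S x) := rfl

lemma extMeasure_eq (f : B → ℝ) (S : Set B) (x : B) :
    extMeasure f S x = sInf (extSet f S x) := rfl

lemma zero_mem_intSet (f : B → ℝ) (S : Set B) (x : B) : (0:ℝ) ∈ intSet f S x := by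
  refine ⟨1, [], [], one_pos, by simp, by simp, ?_, by simp⟩
  intro k hk
  simp at hk

lemma one_mem_extSet {f : B → ℝ} {S : Set B} (x : B) (hf : IsPartialMeasure f S) :
    (1:ℝ) ∈ extSet f S x := by
  refine ⟨1, [⊤], [], one_pos, by simpa using hf.1, by simp, ?_, by simp [hf.2.1]⟩
  intro k hk
  have hk0 : k = 0 := by simpa using hk
  subst hk0
  rw [kJoin_eq_J, kJoin_eq_J, J_one_singleton]
  exact le_top

lemma perm_swap_append (u v w : List B) : ((u ++ w) ++ v).Perm ((u ++ v) ++ w) := by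
  rw [← Multiset.coe_eq_coe]
  have e1 : ∀ p q : List B, ((p ++ q : List B) : Multiset B) = (p : Multiset B) + q := by
    intro p q; rfl
  simp only [e1]
  abel

lemma sum_map_append (f : B → ℝ) (u v : List B) :
    ((u ++ v).map f).sum = (u.map f).sum + (v.map f).sum := by
  rw [List.map_append, List.sum_append]

lemma sum_map_replicate (f : B → ℝ) (m : ℕ) (x : B) :
    ((List.replicate m x).map f).sum = m * f x := by
  rw [List.map_replicate, List.sum_replicate, nsmul_eq_mul]

lemma mix {f : B → ℝ} {S : Set B} {x : B} (hf : IsPartialMeasure f S)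
    {α β : ℝ} (hα : α ∈ intSet f S x) (hβ : β ∈ extSet f S x) : α ≤ β := by
  obtain ⟨m1, a1, b1, hm1, ha1, hb1, hle1, rfl⟩ := hα
  obtain ⟨m2, a2, b2, hm2, ha2, hb2, hle2, rfl⟩ := hβ
  have h1 : seqLE (repList m2 a1) (repList m2 b1 ++ List.replicate (m1 * m2) x) := by
    refine seqLE_perm (List.Perm.refl _) ?_ (seqLE_repList hle1 m2)
    have h := repList_append_perm m2 b1 (List.replicate m1 x)
    rwa [repList_replicate, Nat.mul_comm m2 m1] at h
  have h2 : seqLE (repList m1 b2 ++ List.replicate (m1 * m2) x) (repList m1 a2) := by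
    refine seqLE_perm ?_ (List.Perm.refl _) (seqLE_repList hle2 m1)
    have h := repList_append_perm m1 b2 (List.replicate m2 x)
    rwa [repList_replicate] at h
  have hadd := seqLE_add h1 h2
  have hcomb : seqLE ((repList m2 a1 ++ repList m1 b2) ++ List.replicate (m1*m2) x)
      ((repList m2 b1 ++ repList m1 a2) ++ List.replicate (m1*m2) x) := by
    refine seqLE_perm ?_ (perm_swap_append _ _ _) hadd
    rw [List.append_assoc]
  have hc := seqLE_cancel_replicate (m1*m2) hcomb
  have hsum := hf.2.2.2 _ _ ?_ ?_ hc
  · rw [sum_map_append, sum_map_append, repList_sum, repList_sum, repList_sum,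
      repList_sum] at hsum
    rw [div_le_div_iff₀ (by exact_mod_cast hm1) (by exact_mod_cast hm2)]
    have c1 : (0:ℝ) < m1 := by exact_mod_cast hm1
    have c2 : (0:ℝ) < m2 := by exact_mod_cast hm2
    nlinarith [hsum]
  · intro y hy
    rcases List.mem_append.1 hy with h | h
    · exact ha1 y (repList_mem h)
    · exact hb2 y (repList_mem h)
  · intro y hy
    rcases List.mem_append.1 hy with h | h
    · exact hb1 y (repList_mem h)
    · exact ha2 y (repList_mem h)

lemma intSet_bddAbove {f : B → ℝ} {S : Set B} (x : B) (hf : IsPartialMeasure f S) :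
    BddAbove (intSet f S x) :=
  ⟨1, fun _ ha => mix hf ha (one_mem_extSet x hf)⟩

lemma extSet_bddBelow {f : B → ℝ} {S : Set B} (x : B) (hf : IsPartialMeasure f S) :
    BddBelow (extSet f S x) :=
  ⟨0, fun _ hb => mix hf (zero_mem_intSet f S x) hb⟩

end HT

open HT

/-- Horn–Tarski one-point extension: if `f` is a partial measure on `S`, `x ∈ B`, and `g`
coincides with `f` on `S`, then `g` is a partial measure on `S ∪ {x}` iff
`f_i(x) ≤ g(x) ≤ f_e(x)`. -/
theorem stmt16 (B : Type*) [BooleanAlgebra B] (S : Set B) (f g : B → ℝ) (x : B)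
    (hf : IsPartialMeasure f S) (hg : ∀ y ∈ S, g y = f y) :
    IsPartialMeasure g (S ∪ {x}) ↔
      intMeasure f S x ≤ g x ∧ g x ≤ extMeasure f S x := by
  classical
  constructor
  · intro hG
    constructor
    · rw [intMeasure_eq]
      apply csSup_le ⟨0, zero_mem_intSet f S x⟩
      rintro ξ ⟨m, a, b, hm, ha, hb, hle, rfl⟩
      have key := hG.2.2.2 a (b ++ List.replicate m x)
        (fun y hy => Or.inl (ha y hy))
        (by
          intro y hy
          rcases List.mem_append.1 hy with h | h
          · exact Or.inl (hb y h)
          · exact Or.inr (List.eq_of_mem_replicate h))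
        hle
      rw [sum_map_append, sum_map_replicate] at key
      have e1 : (a.map g).sum = (a.map f).sum := by
        rw [List.map_congr_left (fun y hy => hg y (ha y hy))]
      have e2 : (b.map g).sum = (b.map f).sum := by
        rw [List.map_congr_left (fun y hy => hg y (hb y hy))]
      rw [e1, e2] at key
      have hm' : (0:ℝ) < m := by exact_mod_cast hm
      rw [div_le_iff₀ hm']
      linarith
    · rw [extMeasure_eq]
      apply le_csInf ⟨1, one_mem_extSet x hf⟩
      rintro ξ ⟨m, a, b, hm, ha, hb, hle, rfl⟩
      have key := hG.2.2.2 (b ++ List.replicate m x) a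
        (by
          intro y hy
          rcases List.mem_append.1 hy with h | h
          · exact Or.inl (hb y h)
          · exact Or.inr (List.eq_of_mem_replicate h))
        (fun y hy => Or.inl (ha y hy))
        hle
      rw [sum_map_append, sum_map_replicate] at key
      have e1 : (a.map g).sum = (a.map f).sum := by
        rw [List.map_congr_left (fun y hy => hg y (ha y hy))]
      have e2 : (b.map g).sum = (b.map f).sum := by
        rw [List.map_congr_left (fun y hy => hg y (hb y hy))]
      rw [e1, e2] at key
      have hm' : (0:ℝ) < m := by exact_mod_cast hm
      rw [le_div_iff₀ hm']
      linarith
  · rintro ⟨h1, h2⟩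
    rw [intMeasure_eq] at h1
    rw [extMeasure_eq] at h2
    refine ⟨Or.inl hf.1, by rw [hg ⊤ hf.1]; exact hf.2.1, ?_, ?_⟩
    · rintro y (hy | hy)
      · rw [hg y hy]; exact hf.2.2.1 y hy
      · obtain rfl : y = x := hy
        have h0 : (0:ℝ) ≤ sSup (intSet f S y) :=
          le_csSup (intSet_bddAbove y hf) (zero_mem_intSet f S y)
        linarith
    · intro as bs has hbs hle
      -- decompose into S-part and x-part
      set P : B → Bool := fun y => decide (y ∈ S) with hP
      have decomp : ∀ (l : List B), (∀ y ∈ l, y ∈ S ∪ {x}) →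
          ∃ (l₁ : List B) (p : ℕ), (∀ y ∈ l₁, y ∈ S) ∧
            l.Perm (l₁ ++ List.replicate p x) ∧
            (l.map g).sum = (l₁.map f).sum + p * g x := by
        intro l hl
        refine ⟨l.filter P, (l.filter (fun y => !P y)).length, ?_, ?_, ?_⟩
        · intro y hy
          have := (List.mem_filter.1 hy).2
          rw [hP] at this
          exact of_decide_eq_true this
        · have hrep : l.filter (fun y => !P y) =
              List.replicate (l.filter (fun y => !P y)).length x := by
            apply List.eq_replicate_of_mem
            intro b hb
            have h1 := (List.mem_filter.1 hb).1
            have h2 := (List.mem_filter.1 hb).2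
            rcases hl b h1 with hS | hx
            · exfalso
              rw [hP] at h2
              simp [hS] at h2
            · exact hx
          rw [← hrep]
          exact (List.filter_append_perm P l).symm
        · have hperm : (l.map g).sum =
              ((l.filter P).map g).sum + ((l.filter (fun y => !P y)).map g).sum := by
            have := ((List.filter_append_perm P l).map g).sum_eq
            rw [← this, List.map_append, List.sum_append]
          rw [hperm]
          congr 1
          · apply congrArg List.sum
            apply List.map_congr_left
            intro y hy
            have := (List.mem_filter.1 hy).2
            rw [hP] at this
            exact hg y (of_decide_eq_true this)
          · have hrep : l.filter (fun y => !P y) =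
                List.replicate (l.filter (fun y => !P y)).length x := by
              apply List.eq_replicate_of_mem
              intro b hb
              have hb1 := (List.mem_filter.1 hb).1
              have hb2 := (List.mem_filter.1 hb).2
              rcases hl b hb1 with hS | hx
              · exfalso
                rw [hP] at hb2
                simp [hS] at hb2
              · exact hx
            rw [hrep, sum_map_replicate, List.length_replicate]
      obtain ⟨as₁, p, has₁, hpa, hsa⟩ := decomp as has
      obtain ⟨bs₁, q, hbs₁, hpb, hsb⟩ := decomp bs hbs
      have hle' : seqLE (as₁ ++ List.replicate p x) (bs₁ ++ List.replicate q x) :=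
        seqLE_perm hpa hpb hle
      rw [hsa, hsb]
      rcases lt_trichotomy p q with hpq | hpq | hpq
      · -- p < q : use intMeasure
        set m := q - p with hm
        have hq : q = p + m := by omega
        have hm0 : 0 < m := by omega
        have hle'' : seqLE as₁ (bs₁ ++ List.replicate m x) := by
          apply seqLE_cancel_replicate p
          refine seqLE_perm (List.Perm.refl _) ?_ hle'
          rw [List.append_assoc, ← List.replicate_add]
          have hmp : m + p = q := by omega
          rw [hmp]
        have hmem : ((as₁.map f).sum - (bs₁.map f).sum) / m ∈ intSet f S x :=
          ⟨m, as₁, bs₁, hm0, has₁, hbs₁, hle'', rfl⟩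
        have := le_csSup (intSet_bddAbove x hf) hmem
        have hgx := le_trans this h1
        have hm' : (0:ℝ) < m := by exact_mod_cast hm0
        rw [div_le_iff₀ hm'] at hgx
        have hcast : (q:ℝ) = (p:ℝ) + (m:ℝ) := by exact_mod_cast hq
        have hsplit : (q:ℝ) * g x = (p:ℝ) * g x + (m:ℝ) * g x := by rw [hcast]; ring
        linarith
      · -- p = q : cancel everything
        subst hpq
        have hc : seqLE as₁ bs₁ := seqLE_cancel_replicate p hle'
        have := hf.2.2.2 as₁ bs₁ has₁ hbs₁ hc
        linarith
      · -- p > q : use extMeasure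
        set m := p - q with hm
        have hp : p = q + m := by omega
        have hm0 : 0 < m := by omega
        have hle'' : seqLE (as₁ ++ List.replicate m x) bs₁ := by
          apply seqLE_cancel_replicate q
          refine seqLE_perm ?_ (List.Perm.refl _) hle'
          rw [List.append_assoc, ← List.replicate_add]
          have hmp : m + q = p := by omega
          rw [hmp]
        have hmem : ((bs₁.map f).sum - (as₁.map f).sum) / m ∈ extSet f S x :=
          ⟨m, bs₁, as₁, hm0, hbs₁, has₁, hle'', rfl⟩
        have := csInf_le (extSet_bddBelow x hf) hmem
        have hgx := le_trans h2 this
        have hm' : (0:ℝ) < m := by exact_mod_cast hm0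
        rw [le_div_iff₀ hm'] at hgx
        have hcast : (p:ℝ) = (q:ℝ) + (m:ℝ) := by exact_mod_cast hp
        have hsplit : (p:ℝ) * g x = (q:ℝ) * g x + (m:ℝ) * g x := by rw [hcast]; ring
        linarith
end
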